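/- arXiv:1901.03777 — 10 statements merged into one kernel-verified Lean document; each statement's English description precedes it below -/
import Mathlib

section
/- Let H be a real Hilbert space, N ≥ 2, and c(x₁,...,x_N) = Σ_{i<j}⟨x_i,x_j⟩. A set Γ ⊆ H^N is c-monotone if and only if for every nonempty proper subset K of {1,...,N}, the relation A_K = {(Σ_{i∈K} x_i, Σ_{i∉K} x_i) : x ∈ Γ} ⊆ H × H is a monotone relation. -/
/-!
Writing `‖∑ xᵢ‖² = ∑ ‖xᵢ‖² + 2 c(x)` gives `2 c(x) = ‖∑ xᵢ‖² - ∑ ‖xᵢ‖²`. Exchanging the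
coordinates of `x` and `y` indexed by `K` leaves the multiset of the `‖xᵢ‖², ‖yᵢ‖²` unchanged, so
with `a = ∑_K xᵢ`, `b = ∑_{Kᶜ} xᵢ`, `a' = ∑_K yᵢ`, `b' = ∑_{Kᶜ} yᵢ` the defect
`2 (c(x) + c(y) - c(z^K) - c(z^{Kᶜ}))` equals
`‖a + b‖² + ‖a' + b'‖² - ‖a + b'‖² - ‖a' + b‖² = 2 ⟪a - a', b - b'⟫`.
-/

open scoped RealInnerProductSpace BigOperators

noncomputable section

variable {H : Type*} [NormedAddCommGroup H] [InnerProductSpace ℝ H] [CompleteSpace H]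

/-- The multi-marginal cost `c(x₁,...,x_N) = ∑_{i<j} ⟪x_i, x_j⟫`. -/
def cost {N : ℕ} (x : Fin N → H) : ℝ :=
  ∑ i : Fin N, ∑ j : Fin N, if i < j then ⟪x i, x j⟫ else 0

namespace Fintype

variable {ι M : Type*} [Fintype ι] [AddCommMonoid M]

theorem sum_sum_eq_two_nsmul_sum_lt_add_sum_diag [LinearOrder ι] (f : ι → ι → M)
    (hf : ∀ i j, f i j = f j i) :
    ∑ i, ∑ j, f i j = 2 • ∑ i, ∑ j, (if i < j then f i j else 0) + ∑ i, f i i := by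
  have hsplit : ∀ i j, f i j =
      (if i < j then f i j else 0) + (if j < i then f j i else 0) + (if i = j then f i j else 0) := by
    intro i j
    rcases lt_trichotomy i j with h | rfl | h
    · simp [h, h.not_gt, h.ne]
    · simp
    · simp [h, h.not_gt, h.ne', hf i j]
  simp_rw [Finset.sum_congr rfl fun i _ => Finset.sum_congr rfl fun j _ => hsplit i j,
    Finset.sum_add_distrib, Finset.sum_ite_eq, Finset.mem_univ, if_true]
  rw [Finset.sum_comm (f := fun i j => if j < i then f j i else 0), two_nsmul]

theorem sum_ite_mem_eq_sum_add_sum_compl [DecidableEq ι] (s : Finset ι) (f g : ι → M) :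
    ∑ i, (if i ∈ s then f i else g i) = ∑ i ∈ s, f i + ∑ i ∈ sᶜ, g i := by
  rw [Finset.sum_ite, Finset.filter_mem_eq_inter, Finset.univ_inter, Finset.filter_not,
    Finset.filter_mem_eq_inter, Finset.univ_inter, Finset.compl_eq_univ_sdiff]

end Fintype

section

variable {E : Type*} [NormedAddCommGroup E] [InnerProductSpace ℝ E]

theorem two_mul_inner_sub_sub_eq_norm_sq (a a' b b' : E) :
    2 * ⟪a - a', b - b'⟫ = ‖a + b‖ ^ 2 + ‖a' + b'‖ ^ 2 - ‖a + b'‖ ^ 2 - ‖a' + b‖ ^ 2 := by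
  simp only [norm_add_sq_real, inner_sub_left, inner_sub_right]
  ring

theorem two_mul_cost {N : ℕ} (x : Fin N → E) :
    2 * cost x = ‖∑ i, x i‖ ^ 2 - ∑ i, ‖x i‖ ^ 2 := by
  have hsq : ‖∑ i, x i‖ ^ 2 = ∑ i, ∑ j, ⟪x i, x j⟫ := by
    simp_rw [← real_inner_self_eq_norm_sq, sum_inner, inner_sum]
  rw [hsq, Fintype.sum_sum_eq_two_nsmul_sum_lt_add_sum_diag _ fun i j => real_inner_comm _ _,
    two_nsmul, cost]
  simp_rw [real_inner_self_eq_norm_sq]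
  ring

theorem cost_add_cost_sub_cost_exchange {N : ℕ} (K : Finset (Fin N)) (x y : Fin N → E) :
    cost x + cost y -
        (cost (fun i => if i ∈ K then x i else y i) + cost (fun i => if i ∈ K then y i else x i)) =
      ⟪(∑ i ∈ K, x i) - ∑ i ∈ K, y i, (∑ i ∈ Kᶜ, x i) - ∑ i ∈ Kᶜ, y i⟫ := by
  have hdiag : ∑ i, ‖if i ∈ K then x i else y i‖ ^ 2 + ∑ i, ‖if i ∈ K then y i else x i‖ ^ 2 =
      ∑ i, ‖x i‖ ^ 2 + ∑ i, ‖y i‖ ^ 2 := by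
    simp_rw [← Finset.sum_add_distrib]
    refine Finset.sum_congr rfl fun i _ => ?_
    split_ifs <;> ring
  refine mul_left_cancel₀ (two_ne_zero (α := ℝ)) ?_
  rw [two_mul_inner_sub_sub_eq_norm_sq, mul_sub, mul_add, mul_add, two_mul_cost, two_mul_cost,
    two_mul_cost, two_mul_cost, Fintype.sum_ite_mem_eq_sum_add_sum_compl,
    Fintype.sum_ite_mem_eq_sum_add_sum_compl, ← Finset.sum_add_sum_compl K x,
    ← Finset.sum_add_sum_compl K y]
  linarith

theorem cost_exchange_le_iff {N : ℕ} (K : Finset (Fin N)) (x y : Fin N → E) :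
    cost (fun i => if i ∈ K then x i else y i) + cost (fun i => if i ∈ K then y i else x i) ≤
        cost x + cost y ↔
      0 ≤ ⟪(∑ i ∈ K, x i) - ∑ i ∈ K, y i, (∑ i ∈ Kᶜ, x i) - ∑ i ∈ Kᶜ, y i⟫ := by
  rw [← sub_nonneg, cost_add_cost_sub_cost_exchange]

end

theorem c_monotone_iff_AK_monotone_general {N : ℕ} (Γ : Set (Fin N → H)) :
    (∀ x ∈ Γ, ∀ y ∈ Γ, ∀ K : Finset (Fin N), K.Nonempty → K ≠ Finset.univ →
      cost (fun i => if i ∈ K then x i else y i) +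
        cost (fun i => if i ∈ K then y i else x i) ≤ cost x + cost y) ↔
    (∀ K : Finset (Fin N), K.Nonempty → K ≠ Finset.univ →
      ∀ x ∈ Γ, ∀ y ∈ Γ,
        0 ≤ ⟪(∑ i ∈ K, x i) - ∑ i ∈ K, y i, (∑ i ∈ Kᶜ, x i) - ∑ i ∈ Kᶜ, y i⟫) := by
  simp only [cost_exchange_le_iff]
  exact ⟨fun h K hK hKu x hx y hy => h x hx y hy K hK hKu,
    fun h x hx y hy K hK hKu => h K hK hKu x hx y hy⟩

/-- A set `Γ ⊆ H^N` is `c`-monotone iff for every nonempty proper index set `K`,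
the induced relation `A_K = {(∑_{i∈K} x_i, ∑_{i∉K} x_i) : x ∈ Γ}` is monotone. -/
theorem c_monotone_iff_AK_monotone {N : ℕ} (hN : 2 ≤ N) (Γ : Set (Fin N → H)) :
    (∀ x ∈ Γ, ∀ y ∈ Γ, ∀ K : Finset (Fin N), K.Nonempty → K ≠ Finset.univ →
      cost (fun i => if i ∈ K then x i else y i) +
        cost (fun i => if i ∈ K then y i else x i) ≤ cost x + cost y) ↔
    (∀ K : Finset (Fin N), K.Nonempty → K ≠ Finset.univ →
      ∀ x ∈ Γ, ∀ y ∈ Γ,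
        0 ≤ ⟪(∑ i ∈ K, x i) - ∑ i ∈ K, y i, (∑ i ∈ Kᶜ, x i) - ∑ i ∈ Kᶜ, y i⟫) :=
  c_monotone_iff_AK_monotone_general Γ
end
end

section
/- Let Γ ⊆ H^N be a c-monotone set for c(x₁,...,x_N) = Σ_{i<j}⟨x_i,x_j⟩. If u, v ∈ Γ satisfy Σ_{i=1}^N (u_i - v_i) = 0 componentwise summed to zero (i.e., u - v lies in Δ^⊥ = {d ∈ H^N : Σ d_i = 0}), then u = v. -/
/-! Testing c-monotonicity on a singleton `K = {i}` gives `⟪d i, ∑_{j ≠ i} d j⟫ ≥ 0` for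
`d = u - v`. When `∑ d = 0` the second argument is `-d i`, so `-‖d i‖² ≥ 0` and `d i = 0`. -/

open scoped RealInnerProductSpace BigOperators

noncomputable section

variable {H : Type*} [NormedAddCommGroup H] [InnerProductSpace ℝ H] [CompleteSpace H]

/-- `Γ ⊆ H^N` is `c`-monotone: for all `u, v ∈ Γ` and every nonempty proper index set `K`,
`⟪∑_{i∈K}(u_i - v_i), ∑_{i∉K}(u_i - v_i)⟫ ≥ 0`. -/
def CMono {N : ℕ} (Γ : Set (Fin N → H)) : Prop :=
  ∀ u ∈ Γ, ∀ v ∈ Γ, ∀ K : Finset (Fin N), K.Nonempty → K ≠ Finset.univ →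
    0 ≤ ⟪∑ i ∈ K, (u i - v i), ∑ i ∈ Kᶜ, (u i - v i)⟫

theorem Finset.sum_compl_singleton_eq_neg {ι M : Type*} [Fintype ι] [DecidableEq ι]
    [AddCommGroup M] {f : ι → M} (hf : ∑ i, f i = 0) (a : ι) :
    ∑ i ∈ {a}ᶜ, f i = -f a :=
  eq_neg_of_add_eq_zero_right <| (Fintype.sum_eq_add_sum_compl a f).symm.trans hf

section

variable {E : Type*} [NormedAddCommGroup E] [InnerProductSpace ℝ E]

theorem CMono.inner_sub_sum_compl_singleton_nonneg {N : ℕ} [Nontrivial (Fin N)]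
    {Γ : Set (Fin N → E)} (hΓ : CMono Γ) {u v : Fin N → E} (hu : u ∈ Γ) (hv : v ∈ Γ)
    (i : Fin N) : 0 ≤ ⟪u i - v i, ∑ j ∈ {i}ᶜ, (u j - v j)⟫ := by
  simpa only [Finset.sum_singleton] using
    hΓ u hu v hv {i} (Finset.singleton_nonempty i) (Finset.singleton_ne_univ i)

end

theorem eq_of_sub_mem_diagPerp {N : ℕ} (hN : 2 ≤ N) (Γ : Set (Fin N → H))
    (hΓ : CMono Γ) (u v : Fin N → H) (hu : u ∈ Γ) (hv : v ∈ Γ)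
    (hsum : ∑ i, (u i - v i) = 0) : u = v := by
  have : Nontrivial (Fin N) := Fin.nontrivial_iff_two_le.mpr hN
  funext i
  have hmono := hΓ.inner_sub_sum_compl_singleton_nonneg hu hv i
  rw [Finset.sum_compl_singleton_eq_neg hsum, inner_neg_right, neg_nonneg] at hmono
  exact sub_eq_zero.mp (real_inner_self_nonpos.mp hmono)
end
end

section
/- Let Γ ⊆ H^N be c-monotone, i.e., for all u, v ∈ Γ and all nonempty proper K ⊆ {1,...,N}, ⟨Σ_{i∈K}(u_i-v_i), Σ_{i∉K}(u_i-v_i)⟩ ≥ 0. Then the map from Γ to H given by x ↦ Σ_{i=1}^N x_i is injective, and hence Γ is parameterized as Γ = {(J₁(s),...,J_N(s)) : s ∈ S(Γ)} where S(x) = Σ x_i and J_i(S(x)) = x_i; moreover each J_i is firmly nonexpansive on S(Γ) and J₁ + ... + J_N = Id on S(Γ). -/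
open scoped RealInnerProductSpace BigOperators

noncomputable section

variable {H : Type*} [NormedAddCommGroup H] [InnerProductSpace ℝ H] [CompleteSpace H]

/-- The summation map `S(x) = ∑ᵢ xᵢ`. -/
def S {N : ℕ} (x : Fin N → H) : H := ∑ i, x i

/-!
Applied to `K = {i}`, c-monotonicity of `u, v` says that `a = uᵢ - vᵢ` and `b = ∑_{j ≠ i} (uⱼ - vⱼ)`
satisfy `⟪a, b⟫ ≥ 0`, hence `‖a‖² + ‖b‖² ≤ ‖a + b‖² = ‖S u - S v‖²`. With `S u = S v` this forces
`uᵢ = vᵢ`, so `S` is injective on `Γ`; for general `u, v` it is exactly the firm nonexpansiveness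
of `Jᵢ = (S|_Γ)⁻¹(·)ᵢ`.
-/

theorem S_sub_S {G : Type*} [NormedAddCommGroup G] {N : ℕ} (u v : Fin N → G) :
    S u - S v = ∑ i, (u i - v i) :=
  (Finset.sum_sub_distrib ..).symm

section

variable {E : Type*} [NormedAddCommGroup E] [InnerProductSpace ℝ E]

theorem norm_sq_add_norm_sq_le_of_inner_nonneg {a b : E} (h : 0 ≤ ⟪a, b⟫) :
    ‖a‖ ^ 2 + ‖b‖ ^ 2 ≤ ‖a + b‖ ^ 2 := by
  rw [norm_add_sq_real]
  linarith

namespace CMono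

variable {N : ℕ} {Γ : Set (Fin N → E)}

theorem norm_sq_add_norm_sq_compl_le (hΓ : CMono Γ) {u v : Fin N → E} (hu : u ∈ Γ) (hv : v ∈ Γ)
    {K : Finset (Fin N)} (hK : K.Nonempty) (hKu : K ≠ Finset.univ) :
    ‖∑ i ∈ K, (u i - v i)‖ ^ 2 + ‖∑ i ∈ Kᶜ, (u i - v i)‖ ^ 2 ≤ ‖S u - S v‖ ^ 2 := by
  rw [S_sub_S, ← Finset.sum_add_sum_compl K]
  exact norm_sq_add_norm_sq_le_of_inner_nonneg (hΓ u hu v hv K hK hKu)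

theorem norm_sq_add_norm_sq_le (hN : 2 ≤ N) (hΓ : CMono Γ) {u v : Fin N → E} (hu : u ∈ Γ)
    (hv : v ∈ Γ) (i : Fin N) :
    ‖u i - v i‖ ^ 2 + ‖(S u - u i) - (S v - v i)‖ ^ 2 ≤ ‖S u - S v‖ ^ 2 := by
  have : Nontrivial (Fin N) := Fin.nontrivial_iff_two_le.mpr hN
  have hcompl : ∑ j ∈ {i}ᶜ, (u j - v j) = (S u - u i) - (S v - v i) := by
    have hsplit := Finset.sum_add_sum_compl {i} fun j => u j - v j
    rw [Finset.sum_singleton, ← S_sub_S] at hsplit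
    rw [sub_sub_sub_comm, ← hsplit, add_sub_cancel_left]
  simpa [hcompl] using
    hΓ.norm_sq_add_norm_sq_compl_le hu hv (Finset.singleton_nonempty i) (Finset.singleton_ne_univ i)

theorem injOn_S (hN : 2 ≤ N) (hΓ : CMono Γ) : Set.InjOn S Γ := by
  intro u hu v hv huv
  funext i
  have h := hΓ.norm_sq_add_norm_sq_le hN hu hv i
  rw [huv, sub_self, norm_zero] at h
  have : ‖u i - v i‖ ^ 2 = 0 := by
    nlinarith [sq_nonneg ‖u i - v i‖, sq_nonneg ‖(S v - u i) - (S v - v i)‖]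
  simpa [sub_eq_zero] using this

end CMono

end

theorem c_monotone_parametrization {N : ℕ} (hN : 2 ≤ N) (Γ : Set (Fin N → H))
    (hΓ : CMono Γ) :
    (∀ u ∈ Γ, ∀ v ∈ Γ, S u = S v → u = v) ∧
    ∃ J : Fin N → H → H,
      (∀ x ∈ Γ, ∀ i, J i (S x) = x i) ∧
      (Γ = {x : Fin N → H | ∃ s ∈ S '' Γ, x = fun i => J i s}) ∧
      (∀ i : Fin N, ∀ x ∈ Γ, ∀ y ∈ Γ,
        ‖J i (S x) - J i (S y)‖ ^ 2 + ‖(S x - J i (S x)) - (S y - J i (S y))‖ ^ 2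
          ≤ ‖S x - S y‖ ^ 2) ∧
      (∀ x ∈ Γ, ∑ i, J i (S x) = S x) := by
  have hinj := hΓ.injOn_S hN
  have hJ : ∀ x ∈ Γ, Function.invFunOn S Γ (S x) = x := fun x hx => hinj.leftInvOn_invFunOn hx
  refine ⟨fun u hu v hv => (hinj hu hv ·), fun i s => Function.invFunOn S Γ s i,
    fun x hx i => congrFun (hJ x hx) i, ?_, fun i x hx y hy => ?_,
    fun x hx => congrArg S (hJ x hx)⟩
  · ext x
    refine ⟨fun hx => ⟨S x, ⟨x, hx, rfl⟩, (hJ x hx).symm⟩, ?_⟩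
    rintro ⟨_, ⟨y, hy, rfl⟩, rfl⟩
    simpa only [hJ y hy] using hy
  · simpa only [hJ x hx, hJ y hy] using hΓ.norm_sq_add_norm_sq_le hN hx hy i
end
end

section
/- Let Γ ⊆ H^N be c-monotone. If there exists a nonempty proper subset K of {1,...,N} such that the relation A_K = {(Σ_{i∈K}x_i, Σ_{i∉K}x_i) : x ∈ Γ} is maximally monotone, then Γ + Δ^⊥ = H^N, where Δ^⊥ = {d ∈ H^N : Σ_{i=1}^N d_i = 0}. -/
open scoped RealInnerProductSpace BigOperators

noncomputable section

variable {H : Type*} [NormedAddCommGroup H] [InnerProductSpace ℝ H] [CompleteSpace H]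

/-- A relation `G ⊆ H × H` is monotone. -/
def MonoRel (G : Set (H × H)) : Prop :=
  ∀ p ∈ G, ∀ q ∈ G, 0 ≤ ⟪p.1 - q.1, p.2 - q.2⟫

/-- A relation `G ⊆ H × H` is maximally monotone: it is monotone and has no proper
monotone extension. -/
def MaxMonoRel (G : Set (H × H)) : Prop :=
  MonoRel G ∧ ∀ p : H × H, (∀ q ∈ G, 0 ≤ ⟪p.1 - q.1, p.2 - q.2⟫) → p ∈ G

/-! Minty's theorem through the Kirszbraun–Valentine ball-intersection property. Monotonicity of
`G` says `‖c p - c q‖ ≤ ‖r p - r q‖` for `c (x, u) = x - u + s` and `r (x, u) = x + u - s`, so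
the closed balls `B(c p, ‖r p‖)`, `p ∈ G`, share a point `2 • y`; that is exactly the monotone
relation of `(y, s - y)` with `G`, so maximality puts it in `G`. With `s = ∑ i, a i` this yields
`x ∈ Γ` with `∑ i, x i = ∑ i, a i`, and `d = a - x`.

A finite family of such balls meets: minimize the largest excess `‖x - c i‖ ^ 2 - ‖r i‖ ^ 2` over
the hull of the centres; a minimizer lies in the hull of the active centres, where comparing the
weighted variances of `c` and `r` rules out a positive excess. An arbitrary family then meets
because the minimal-norm points of the finite intersections form a Cauchy net. -/

open Finset Filter
open scoped Topology

section Kirszbraun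

variable {E : Type*} [NormedAddCommGroup E] [InnerProductSpace ℝ E]
variable {F : Type*} [NormedAddCommGroup F] [InnerProductSpace ℝ F]

theorem sum_mul_norm_sub_sum_smul_sq {ι : Type*} [Fintype ι] {w : ι → ℝ} (hw : ∑ i, w i = 1)
    (p : ι → E) :
    ∑ i, w i * ‖p i - ∑ j, w j • p j‖ ^ 2 = ∑ i, w i * ‖p i‖ ^ 2 - ‖∑ j, w j • p j‖ ^ 2 := by
  have hb : ∑ i, w i * ⟪p i, ∑ j, w j • p j⟫ = ‖∑ j, w j • p j‖ ^ 2 := by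
    simp only [← real_inner_smul_left, ← sum_inner, real_inner_self_eq_norm_sq]
  simp only [norm_sub_sq_real, mul_add, mul_sub, sum_add_distrib, sum_sub_distrib, ← sum_mul, hw,
    mul_left_comm _ (2 : ℝ), ← mul_sum, hb]
  ring

theorem sum_sum_mul_norm_sub_sq {ι : Type*} [Fintype ι] {w : ι → ℝ} (hw : ∑ i, w i = 1)
    (p : ι → E) :
    ∑ i, ∑ j, w i * w j * ‖p i - p j‖ ^ 2 = 2 * (∑ i, w i * ‖p i‖ ^ 2 - ‖∑ j, w j • p j‖ ^ 2) := by
  have hb : ∑ i, ∑ j, w i * w j * ⟪p i, p j⟫ = ‖∑ j, w j • p j‖ ^ 2 := by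
    simp only [← real_inner_self_eq_norm_sq, sum_inner, inner_sum, real_inner_smul_left,
      real_inner_smul_right, mul_assoc]
    exact sum_congr rfl fun i _ => sum_congr rfl fun j _ => by rw [real_inner_comm]
  have h1 : ∑ i, ∑ j, w i * w j * ‖p i‖ ^ 2 = ∑ i, w i * ‖p i‖ ^ 2 := by
    simp only [mul_right_comm (w _) (w _), ← mul_sum, hw, mul_one]
  have h2 : ∑ i, ∑ j, w i * w j * ‖p j‖ ^ 2 = ∑ i, w i * ‖p i‖ ^ 2 := by
    rw [sum_comm]; simp only [mul_comm (w _) (w _)]; exact h1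
  simp only [norm_sub_sq_real, mul_add, mul_sub, sum_add_distrib, sum_sub_distrib, h1, h2]
  simp only [mul_left_comm _ (2 : ℝ), ← mul_sum, hb]
  ring

theorem sum_mul_norm_sub_sum_smul_sq_le {ι : Type*} [Fintype ι] {w : ι → ℝ} (hw₀ : ∀ i, 0 ≤ w i)
    (hw₁ : ∑ i, w i = 1) (p : ι → E) (q : ι → F) (hpq : ∀ i j, ‖p i - p j‖ ≤ ‖q i - q j‖) :
    ∑ i, w i * ‖p i - ∑ j, w j • p j‖ ^ 2 ≤ ∑ i, w i * ‖q i‖ ^ 2 := by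
  have hpairs : ∑ i, ∑ j, w i * w j * ‖p i - p j‖ ^ 2 ≤ ∑ i, ∑ j, w i * w j * ‖q i - q j‖ ^ 2 :=
    sum_le_sum fun i _ => sum_le_sum fun j _ =>
      mul_le_mul_of_nonneg_left (by gcongr; exact hpq i j) (mul_nonneg (hw₀ i) (hw₀ j))
  rw [sum_sum_mul_norm_sub_sq hw₁, sum_sum_mul_norm_sub_sq hw₁] at hpairs
  rw [sum_mul_norm_sub_sum_smul_sq hw₁]
  nlinarith [sq_nonneg ‖∑ j, w j • q j‖]

theorem exists_norm_sub_le_of_mem_convexHull {ι : Type*} (c : ι → E) (r : ι → F) {s : Set ι}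
    (hcr : ∀ i ∈ s, ∀ j ∈ s, ‖c i - c j‖ ≤ ‖r i - r j‖) {x : E}
    (hx : x ∈ convexHull ℝ (c '' s)) : ∃ i ∈ s, ‖x - c i‖ ≤ ‖r i‖ := by
  obtain ⟨κ, _, w, z, hw₀, hw₁, hz, rfl⟩ := mem_convexHull_iff_exists_fintype.1 hx
  choose idx hidx hcz using hz
  simp only [← hcz]
  by_contra! hfar
  have hsq : ∀ k, ‖r (idx k)‖ ^ 2 < ‖c (idx k) - ∑ l, w l • c (idx l)‖ ^ 2 := fun k => by
    rw [norm_sub_rev]; gcongr; exact hfar _ (hidx k)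
  obtain ⟨k, -, hk⟩ : ∃ k ∈ univ, (0 : ℝ) < w k := exists_lt_of_sum_lt (by simp [hw₁])
  have hlt : ∑ k, w k * ‖r (idx k)‖ ^ 2 < ∑ k, w k * ‖c (idx k) - ∑ l, w l • c (idx l)‖ ^ 2 :=
    sum_lt_sum (fun k _ => mul_le_mul_of_nonneg_left (hsq k).le (hw₀ k))
      ⟨k, mem_univ k, mul_lt_mul_of_pos_left (hsq k) hk⟩
  exact hlt.not_ge (sum_mul_norm_sub_sum_smul_sq_le hw₀ hw₁ _ _
    fun k l => hcr _ (hidx k) _ (hidx l))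

theorem IsComplete.exists_mem_forall_inner_sub_neg {K : Set E} (hne : K.Nonempty)
    (hc : IsComplete K) (hK : Convex ℝ K) {x : E} (hx : x ∉ K) :
    ∃ p ∈ K, ∀ z ∈ K, ⟪x - z, p - x⟫ < 0 := by
  obtain ⟨p, hpK, hp⟩ := exists_norm_eq_iInf_of_complete_convex hne hc hK x
  have hvar := (norm_eq_iInf_iff_real_inner_le_zero hK hpK).1 hp
  have hxp : 0 < ‖x - p‖ := norm_pos_iff.2 (sub_ne_zero.2 fun h => hx (h ▸ hpK))
  refine ⟨p, hpK, fun z hz => ?_⟩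
  have : ⟪x - z, p - x⟫ = ⟪x - p, z - p⟫ - ‖x - p‖ ^ 2 := by
    rw [show x - z = (x - p) - (z - p) by abel, ← neg_sub x p, inner_neg_right, inner_sub_left,
      real_inner_self_eq_norm_sq, real_inner_comm]
    ring
  nlinarith [hvar z hz]

theorem norm_add_smul_sq (u d : E) (t : ℝ) :
    ‖u + t • d‖ ^ 2 = ‖u‖ ^ 2 + t * (2 * ⟪u, d⟫ + t * ‖d‖ ^ 2) := by
  rw [norm_add_sq_real, real_inner_smul_right, norm_smul, mul_pow, Real.norm_eq_abs, sq_abs]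
  ring

theorem exists_forall_norm_sub_sq_lt_of_notMem_convexHull {ι : Type*} {S : Finset ι} {c : ι → E}
    {r : ι → ℝ} {K : Set E} (hK : Convex ℝ K) (hcK : ∀ i ∈ S, c i ∈ K) {x : E} (hxK : x ∈ K)
    (hle : ∀ i ∈ S, ‖x - c i‖ ^ 2 ≤ r i)
    (hx : x ∉ convexHull ℝ (c '' {i | i ∈ S ∧ ‖x - c i‖ ^ 2 = r i})) :
    ∃ y ∈ K, ∀ i ∈ S, ‖y - c i‖ ^ 2 < r i := by
  set A := convexHull ℝ (c '' {i | i ∈ S ∧ ‖x - c i‖ ^ 2 = r i})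
  have hAK : A ⊆ K := convexHull_min (by rintro _ ⟨i, ⟨hi, -⟩, rfl⟩; exact hcK i hi) hK
  obtain ⟨p, hpK, hp⟩ : ∃ p ∈ K, ∀ i ∈ S, ‖x - c i‖ ^ 2 = r i → ⟪x - c i, p - x⟫ < 0 := by
    rcases A.eq_empty_or_nonempty with hA | hA
    · refine ⟨x, hxK, fun i hi hri => absurd (?_ : c i ∈ A) (hA ▸ Set.notMem_empty _)⟩
      exact subset_convexHull ℝ _ ⟨i, ⟨hi, hri⟩, rfl⟩
    have hfin : (c '' {i | i ∈ S ∧ ‖x - c i‖ ^ 2 = r i}).Finite :=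
      (S.finite_toSet.subset fun _ hi => hi.1).image c
    obtain ⟨p, hpA, hp⟩ := (hfin.isCompact_convexHull (𝕜 := ℝ)).isComplete
      |>.exists_mem_forall_inner_sub_neg hA (convex_convexHull ℝ _) hx
    exact ⟨p, hAK hpA, fun i hi hri => hp _ (subset_convexHull ℝ _ ⟨i, ⟨hi, hri⟩, rfl⟩)⟩
  have hnear : ∀ i ∈ S, ∀ᶠ t in 𝓝[>] (0 : ℝ), ‖x + t • (p - x) - c i‖ ^ 2 < r i := by
    intro i hi
    simp only [add_sub_right_comm x, norm_add_smul_sq]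
    rcases (hle i hi).lt_or_eq with hlt | heq
    · refine nhdsWithin_le_nhds (ContinuousAt.eventually_lt (by fun_prop) continuousAt_const ?_)
      simpa using hlt
    · have hneg : ∀ᶠ t in 𝓝 (0 : ℝ), 2 * ⟪x - c i, p - x⟫ + t * ‖p - x‖ ^ 2 < 0 :=
        ContinuousAt.eventually_lt (by fun_prop) continuousAt_const
          (by linarith [hp i hi heq] : 2 * ⟪x - c i, p - x⟫ + 0 * ‖p - x‖ ^ 2 < 0)
      filter_upwards [nhdsWithin_le_nhds hneg, self_mem_nhdsWithin] with t ht ht0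
      rw [heq]
      nlinarith [Set.mem_Ioi.1 ht0]
  have hIcc : ∀ᶠ t in 𝓝[>] (0 : ℝ), t ∈ Set.Icc (0 : ℝ) 1 :=
    mem_of_superset (Ioc_mem_nhdsGT zero_lt_one) Set.Ioc_subset_Icc_self
  obtain ⟨t, ht, hlt⟩ := (hIcc.and ((eventually_all_finset S).2 hnear)).exists
  exact ⟨x + t • (p - x), hK.add_smul_sub_mem hxK hpK ht, hlt⟩

theorem Finset.exists_forall_norm_sub_le {ι : Type*} (S : Finset ι) (c : ι → E) (r : ι → F)
    (hcr : ∀ i ∈ S, ∀ j ∈ S, ‖c i - c j‖ ≤ ‖r i - r j‖) :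
    ∃ x, ∀ i ∈ S, ‖x - c i‖ ≤ ‖r i‖ := by
  rcases S.eq_empty_or_nonempty with rfl | hS
  · exact ⟨0, by simp⟩
  set f : E → ℝ := fun x => S.sup' hS fun i => ‖x - c i‖ ^ 2 - ‖r i‖ ^ 2
  have hK : IsCompact (convexHull ℝ (c '' S)) :=
    (S.finite_toSet.image c).isCompact_convexHull (𝕜 := ℝ)
  have hcK : ∀ i ∈ S, c i ∈ convexHull ℝ (c '' S) := fun i hi => subset_convexHull ℝ _ ⟨i, hi, rfl⟩
  have hf : Continuous f := Continuous.finset_sup'_apply hS fun i _ => by fun_prop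
  obtain ⟨x, hxK, hmin⟩ := hK.exists_isMinOn ((hS.to_set.image c).mono (subset_convexHull ℝ _))
    hf.continuousOn
  suffices hm : f x ≤ 0 by
    refine ⟨x, fun i hi => ?_⟩
    have := (le_sup' (fun i => ‖x - c i‖ ^ 2 - ‖r i‖ ^ 2) hi).trans hm
    exact (pow_le_pow_iff_left₀ (norm_nonneg _) (norm_nonneg _) two_ne_zero).1 (by linarith)
  by_contra! hm
  have hle : ∀ i ∈ S, ‖x - c i‖ ^ 2 ≤ ‖r i‖ ^ 2 + f x := fun i hi => by
    linarith [le_sup' (fun i => ‖x - c i‖ ^ 2 - ‖r i‖ ^ 2) hi]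
  have hhull : x ∈ convexHull ℝ (c '' {i | i ∈ S ∧ ‖x - c i‖ ^ 2 = ‖r i‖ ^ 2 + f x}) := by
    by_contra hx
    obtain ⟨y, hyK, hy⟩ :=
      exists_forall_norm_sub_sq_lt_of_notMem_convexHull (convex_convexHull ℝ _) hcK hxK hle hx
    have hfy : f y < f x := (sup'_lt_iff hS).2 fun i hi => by linarith [hy i hi]
    exact hfy.not_ge (hmin hyK)
  obtain ⟨i, ⟨-, hi⟩, hir⟩ :=
    exists_norm_sub_le_of_mem_convexHull c r (fun i hi j hj => hcr i hi.1 j hj.1) hhull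
  nlinarith [pow_le_pow_left₀ (norm_nonneg _) hir 2]

theorem Convex.exists_mem_forall_norm_sub_sq_le [CompleteSpace E] {K : Set E} (hK : Convex ℝ K)
    (hne : K.Nonempty) (hc : IsClosed K) :
    ∃ v ∈ K, ∀ z ∈ K, ‖z - v‖ ^ 2 ≤ ‖z‖ ^ 2 - ‖v‖ ^ 2 := by
  obtain ⟨v, hvK, hv⟩ := exists_norm_eq_iInf_of_complete_convex hne hc.isComplete hK 0
  have hvar := (norm_eq_iInf_iff_real_inner_le_zero hK hvK).1 hv
  refine ⟨v, hvK, fun z hz => ?_⟩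
  have hexp : ‖z‖ ^ 2 = ‖v‖ ^ 2 + 2 * ⟪v, z - v⟫ + ‖z - v‖ ^ 2 := by
    rw [← norm_add_sq_real, add_sub_cancel]
  have := hvar z hz
  rw [zero_sub, inner_neg_left] at this
  linarith

theorem Antitone.nonempty_iInter_of_convex [CompleteSpace E] {α : Type*} [SemilatticeSup α]
    [Nonempty α] {C : α → Set E} (hanti : Antitone C) (hne : ∀ a, (C a).Nonempty)
    (hclosed : ∀ a, IsClosed (C a)) (hconv : ∀ a, Convex ℝ (C a))
    (hbdd : ∃ a, Bornology.IsBounded (C a)) :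
    (⋂ a, C a).Nonempty := by
  choose v hvC hv using fun a => (hconv a).exists_mem_forall_norm_sub_sq_le (hne a) (hclosed a)
  have hstep : ∀ a b, a ≤ b → ‖v b - v a‖ ^ 2 ≤ ‖v b‖ ^ 2 - ‖v a‖ ^ 2 :=
    fun a b hab => hv a _ (hanti hab (hvC b))
  obtain ⟨a₀, ha₀⟩ := hbdd
  obtain ⟨R, hR⟩ := isBounded_iff_forall_norm_le.1 ha₀
  have hbound : BddAbove (Set.range fun a => ‖v a‖ ^ 2) := by
    refine ⟨R ^ 2, Set.forall_mem_range.2 fun a => ?_⟩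
    have h1 := hstep a (a ⊔ a₀) le_sup_left
    have h2 : ‖v (a ⊔ a₀)‖ ≤ R := hR _ (hanti le_sup_right (hvC _))
    nlinarith [norm_nonneg (v (a ⊔ a₀) - v a), norm_nonneg (v (a ⊔ a₀))]
  have hcauchy : CauchySeq v := by
    refine Metric.cauchySeq_iff'.2 fun ε hε => ?_
    obtain ⟨N, hN⟩ := exists_lt_of_lt_ciSup (sub_lt_self (⨆ a, ‖v a‖ ^ 2) (pow_pos hε 2))
    refine ⟨N, fun n hn => ?_⟩
    have h1 := hstep N n hn
    have h2 := le_ciSup hbound n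
    rw [dist_eq_norm]
    exact lt_of_pow_lt_pow_left₀ 2 hε.le (by linarith)
  obtain ⟨x, hx⟩ := cauchySeq_tendsto_of_complete hcauchy
  exact ⟨x, Set.mem_iInter.2 fun a => (hclosed a).mem_of_tendsto hx
    (eventually_atTop.2 ⟨a, fun b hb => hanti hb (hvC b)⟩)⟩

theorem exists_forall_norm_sub_le [CompleteSpace E] {ι : Type*} (c : ι → E) (r : ι → F)
    (hcr : ∀ i j, ‖c i - c j‖ ≤ ‖r i - r j‖) : ∃ x, ∀ i, ‖x - c i‖ ≤ ‖r i‖ := by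
  classical
  rcases isEmpty_or_nonempty ι with hι | ⟨⟨i₀⟩⟩
  · exact ⟨0, isEmptyElim⟩
  set C : Finset ι → Set E := fun S => ⋂ i ∈ S, Metric.closedBall (c i) ‖r i‖
  have hC : ∀ S x, x ∈ C S ↔ ∀ i ∈ S, ‖x - c i‖ ≤ ‖r i‖ := by
    simp [C, dist_eq_norm]
  have hanti : Antitone C := fun S T hST => Set.biInter_subset_biInter_left (coe_subset.2 hST)
  have hfinite : ∀ S, (C S).Nonempty := fun S => by
    obtain ⟨x, hx⟩ := S.exists_forall_norm_sub_le c r fun i _ j _ => hcr i j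
    exact ⟨x, (hC S x).2 hx⟩
  obtain ⟨x, hx⟩ := hanti.nonempty_iInter_of_convex hfinite
    (fun S => isClosed_biInter fun i _ => Metric.isClosed_closedBall)
    (fun S => convex_iInter₂ fun i _ => convex_closedBall _ _)
    ⟨{i₀}, (Metric.isBounded_closedBall (x := c i₀) (r := ‖r i₀‖)).subset (by simp [C])⟩
  exact ⟨x, fun i => (hC {i} x).1 (Set.mem_iInter.1 hx {i}) i (mem_singleton_self i)⟩

theorem norm_sub_le_norm_add_iff_real_inner_nonneg (u v : E) :
    ‖u - v‖ ≤ ‖u + v‖ ↔ 0 ≤ ⟪u, v⟫ := by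
  rw [← pow_le_pow_iff_left₀ (norm_nonneg _) (norm_nonneg _) two_ne_zero, norm_sub_sq_real,
    norm_add_sq_real]
  constructor <;> intro h <;> linarith

end Kirszbraun

theorem MaxMonoRel.exists_fst_add_snd_eq {G : Set (H × H)} (hG : MaxMonoRel G) (s : H) :
    ∃ p ∈ G, p.1 + p.2 = s := by
  obtain ⟨z, hz⟩ := exists_forall_norm_sub_le (fun p : G => p.1.1 - p.1.2 + s)
    (fun p : G => p.1.1 + p.1.2 - s) fun p q => by
      convert (norm_sub_le_norm_add_iff_real_inner_nonneg _ _).2 (hG.1 _ p.2 _ q.2) using 2 <;>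
        abel
  set y := (2 : ℝ)⁻¹ • z
  refine ⟨(y, s - y), hG.2 _ fun q hq => ?_, add_sub_cancel y s⟩
  refine (norm_sub_le_norm_add_iff_real_inner_nonneg _ _).1 ?_
  convert hz ⟨q, hq⟩ using 1
  · congr 1; simp only [y]; module
  · rw [← norm_neg]; congr 1; dsimp only; abel

theorem surjectivity_of_maxMono_AK_general {N : ℕ} (Γ : Set (Fin N → H))
    (K : Finset (Fin N))
    (hmax : MaxMonoRel {p : H × H | ∃ x ∈ Γ, p = (∑ i ∈ K, x i, ∑ i ∈ Kᶜ, x i)}) :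
    ∀ a : Fin N → H, ∃ x ∈ Γ, ∃ d : Fin N → H, (∑ i, d i) = 0 ∧ x + d = a := by
  intro a
  obtain ⟨_, ⟨x, hxΓ, rfl⟩, hsum⟩ := hmax.exists_fst_add_snd_eq (∑ i, a i)
  rw [sum_add_sum_compl] at hsum
  refine ⟨x, hxΓ, a - x, ?_, add_sub_cancel x a⟩
  simp [sum_sub_distrib, hsum]

theorem surjectivity_of_maxMono_AK {N : ℕ} (hN : 2 ≤ N) (Γ : Set (Fin N → H))
    (hΓ : CMono Γ) (K : Finset (Fin N)) (hK1 : K.Nonempty) (hK2 : K ≠ Finset.univ)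
    (hmax : MaxMonoRel {p : H × H | ∃ x ∈ Γ, p = (∑ i ∈ K, x i, ∑ i ∈ Kᶜ, x i)}) :
    ∀ a : Fin N → H, ∃ x ∈ Γ, ∃ d : Fin N → H, (∑ i, d i) = 0 ∧ x + d = a :=
  surjectivity_of_maxMono_AK_general Γ K hmax
end
end

section
/- Let T₂, ..., T_N : H → H be continuous maps such that Γ = {(x, T₂x, ..., T_N x) : x ∈ H} is c-monotone. Then Γ is maximally c-monotone: any point u ∈ H^N that is c-monotonically related to Γ (i.e., Γ ∪ {u} is c-monotone) belongs to Γ. -/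
/-!
Write `a = u₀`. Comparing `u` with the graph point over `a + t v` for the block `K = {0}` shows
that `c = ∑_{i ≠ 0} u i` is monotonically related, in the classical sense, to the graph of the
continuous map `F = ∑_{i ≠ 0} T i`; letting `t ↓ 0` along the direction `v = c - F a` forces
`c = F a`. Hence the differences `dᵢ = uᵢ - Tᵢ a` sum to zero, and the block `K = {j}` then gives
`0 ≤ ⟪d_j, -d_j⟫`, i.e. every `dᵢ` vanishes.
-/

open scoped RealInnerProductSpace BigOperators

noncomputable section

variable {H : Type*} [NormedAddCommGroup H] [InnerProductSpace ℝ H] [CompleteSpace H]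

section

variable {E : Type*} [NormedAddCommGroup E] [InnerProductSpace ℝ E]

theorem eq_apply_of_forall_inner_sub_nonneg {F : E → E} (hF : Continuous F) {a c : E}
    (h : ∀ b, 0 ≤ ⟪a - b, c - F b⟫) : c = F a := by
  -- Minty's trick: test the graph along the ray `a + t v` and let `t ↓ 0`.
  set v := c - F a
  set g : ℝ → ℝ := fun t => ⟪v, c - F (a + t • v)⟫
  have hg : Continuous g := by fun_prop
  have hg_pos : ∀ t > (0 : ℝ), g t ≤ 0 := fun t ht => by
    have := h (a + t • v)
    rw [sub_add_cancel_left, inner_neg_left, real_inner_smul_left] at this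
    nlinarith
  have hg0 : g 0 ≤ 0 :=
    le_of_tendsto ((hg.tendsto 0).mono_left (nhdsWithin_le_nhds (s := Set.Ioi 0)))
      (eventually_mem_nhdsWithin.mono hg_pos)
  have hv : ⟪v, v⟫ ≤ 0 := by simpa only [g, zero_smul, add_zero] using hg0
  exact sub_eq_zero.mp (inner_self_eq_zero.mp (le_antisymm hv real_inner_self_nonneg))

theorem eq_zero_of_sum_eq_zero_of_inner_sum_compl_nonneg {ι : Type*} [Fintype ι] [DecidableEq ι]
    {d : ι → E} (hsum : ∑ i, d i = 0) (hd : ∀ j, 0 ≤ ⟪d j, ∑ i ∈ {j}ᶜ, d i⟫) (j : ι) :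
    d j = 0 := by
  have hcompl : ∑ i ∈ {j}ᶜ, d i = -d j := by
    rw [eq_neg_iff_add_eq_zero, add_comm, ← Finset.sum_singleton d j,
      Finset.sum_add_sum_compl, hsum]
  have hj := hd j
  rw [hcompl, inner_neg_right, neg_nonneg] at hj
  exact inner_self_eq_zero.mp (le_antisymm hj real_inner_self_nonneg)

theorem CMono.inner_sub_sum_compl_nonneg {N : ℕ} (hN : 2 ≤ N) {Γ : Set (Fin N → E)}
    (hΓ : CMono Γ) {u v : Fin N → E} (hu : u ∈ Γ) (hv : v ∈ Γ) (j : Fin N) :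
    0 ≤ ⟪u j - v j, ∑ i ∈ {j}ᶜ, (u i - v i)⟫ := by
  have : Nontrivial (Fin N) := Fin.nontrivial_iff_two_le.mpr hN
  simpa using hΓ u hu v hv {j} (Finset.singleton_nonempty j) (Finset.singleton_ne_univ j)

end

/-- A `c`-monotone graph of a continuous map `x ↦ (x, T₂x, ..., T_Nx)` is
maximally `c`-monotone. -/
theorem continuous_c_monotone_is_maximal {N : ℕ} (hN : 2 ≤ N)
    (T : Fin N → H → H) (hT0 : T ⟨0, by omega⟩ = id)
    (hcont : ∀ i, Continuous (T i))
    (u : Fin N → H)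
    (hu : CMono ({x : Fin N → H | ∃ a : H, x = fun i => T i a} ∪ {u})) :
    u ∈ {x : Fin N → H | ∃ a : H, x = fun i => T i a} := by
  classical
  set i₀ : Fin N := ⟨0, by omega⟩
  set a := u i₀
  have hrel : ∀ b j, 0 ≤ ⟪u j - T j b, ∑ i ∈ {j}ᶜ, (u i - T i b)⟫ := fun b =>
    hu.inner_sub_sum_compl_nonneg hN (Or.inr rfl) (Or.inl ⟨b, rfl⟩)
  have hrest : ∑ i ∈ {i₀}ᶜ, u i = ∑ i ∈ {i₀}ᶜ, T i a := by
    refine eq_apply_of_forall_inner_sub_nonneg (F := fun b => ∑ i ∈ {i₀}ᶜ, T i b)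
      (by fun_prop) fun b => ?_
    simpa [hT0, Finset.sum_sub_distrib] using hrel b i₀
  have hsum : ∑ i, (u i - T i a) = 0 := by
    rw [← Finset.sum_add_sum_compl {i₀}, Finset.sum_singleton, Finset.sum_sub_distrib, hrest,
      hT0, id, sub_self, zero_add, sub_self]
  refine ⟨a, funext fun j => sub_eq_zero.mp ?_⟩
  exact eq_zero_of_sum_eq_zero_of_inner_sum_compl_nonneg hsum (hrel a) j
end
end

section
/- Let f₁,...,f_N : H → ℝ ∪ {+∞} be proper, lower semicontinuous convex functions. Then c ≤ f₁ ⊕ ... ⊕ f_N (i.e., Σ_{i<j}⟨x_i,x_j⟩ ≤ Σ_i f_i(x_i) for all x ∈ H^N) if and only if for all s ∈ H, Σ_{i=1}^N e_{f_i^*}(s) ≤ ½‖s‖², where e_g denotes the Moreau envelope e_g(s) = inf_x (g(x) + ½‖s-x‖²) and f^* is the Fenchel conjugate. -/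
open scoped RealInnerProductSpace BigOperators

noncomputable section

variable {H : Type*} [NormedAddCommGroup H] [InnerProductSpace ℝ H] [CompleteSpace H]

/-- `q(x) = ½‖x‖²`. -/
def q (x : H) : ℝ := (1 / 2) * ‖x‖ ^ 2

/-- Convexity for extended-real-valued functions. -/
def EConvex (f : H → EReal) : Prop :=
  ∀ x y : H, ∀ a b : ℝ, 0 ≤ a → 0 ≤ b → a + b = 1 →
    f (a • x + b • y) ≤ (a : EReal) * f x + (b : EReal) * f y

/-- The Fenchel conjugate `f*(u) = sup_x (⟪u,x⟫ - f(x))`. -/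
def econj (f : H → EReal) (u : H) : EReal :=
  ⨆ x : H, ((⟪u, x⟫ : ℝ) : EReal) - f x

/-- The Moreau envelope `e_f(s) = inf_x (f(x) + q(s - x))`. -/
def env (f : H → EReal) (s : H) : EReal :=
  ⨅ x : H, f x + ((q (s - x) : ℝ) : EReal)


/-!
Both directions rest on the identity `c(x) + ∑ q(s - xᵢ) = (N - 1) q(s) + q(∑ xᵢ - s)`.
If the envelope inequality holds, Fenchel–Young gives `e_{fᵢ*}(s) ≥ q(s) - q(s - xᵢ) - fᵢ(xᵢ)`;
summing at `s = ∑ xᵢ` yields `c(x) ≤ ∑ fᵢ(xᵢ)`. Conversely, `c ≤ f₁ ⊕ ⋯ ⊕ f_N` bounds each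
`fᵢ + q(s - ·)` from below; being lower semicontinuous and strongly convex on a complete space it
has a minimiser `xᵢ` (the proximal point), where `s - xᵢ` is a subgradient of `fᵢ`, so that
`e_{fᵢ*}(s) ≤ q(s) - fᵢ(xᵢ) - q(s - xᵢ)`. Summing and applying `c(x) ≤ ∑ fᵢ(xᵢ)` with the identity
gives `∑ e_{fᵢ*}(s) ≤ q(s)`.
-/

open Finset Filter Topology

@[norm_cast]
lemma EReal.coe_finset_sum {ι : Type*} (s : Finset ι) (g : ι → ℝ) :
    ((∑ i ∈ s, g i : ℝ) : EReal) = ∑ i ∈ s, (g i : EReal) :=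
  map_sum (⟨⟨Real.toEReal, EReal.coe_zero⟩, EReal.coe_add⟩ : ℝ →+ EReal) g s

lemma EReal.finset_sum_ne_bot {ι : Type*} {s : Finset ι} {g : ι → EReal}
    (h : ∀ i ∈ s, g i ≠ ⊥) : ∑ i ∈ s, g i ≠ ⊥ :=
  Finset.sum_induction g (· ≠ ⊥) (fun _ _ ha hb => EReal.add_ne_bot_iff.2 ⟨ha, hb⟩)
    EReal.zero_ne_bot h

lemma EReal.finset_sum_eq_top {ι : Type*} {s : Finset ι} {g : ι → EReal} {i : ι}
    (h : ∀ j ∈ s, g j ≠ ⊥) (hi : i ∈ s) (htop : g i = ⊤) : ∑ j ∈ s, g j = ⊤ := by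
  classical
  rw [← Finset.add_sum_erase s g hi, htop]
  exact EReal.top_add_of_ne_bot (EReal.finset_sum_ne_bot fun j hj => h j (mem_of_mem_erase hj))

lemma q_zero {E : Type*} [NormedAddCommGroup E] : q (0 : E) = 0 := by
  simp [q]

lemma q_nonneg {E : Type*} [NormedAddCommGroup E] (x : E) : 0 ≤ q x := by
  unfold q; positivity

section InnerProductSpace

variable {E : Type*} [NormedAddCommGroup E] [InnerProductSpace ℝ E]

lemma q_sub (x y : E) : q (x - y) = q x - ⟪x, y⟫ + q y := by
  unfold q; rw [norm_sub_sq_real]; ring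

lemma q_smul_add_smul (u v : E) {a b : ℝ} (hab : a + b = 1) :
    q (a • u + b • v) = a * q u + b * q v - a * b * q (u - v) := by
  obtain rfl : b = 1 - a := by linarith
  simp only [q, norm_add_sq_real, norm_sub_sq_real, norm_smul, real_inner_smul_left,
    real_inner_smul_right, mul_pow, Real.norm_eq_abs, sq_abs]
  ring

lemma two_mul_cost_add_sum_norm_sq {N : ℕ} (x : Fin N → E) :
    2 * cost x + ∑ i, ‖x i‖ ^ 2 = ‖∑ i, x i‖ ^ 2 := by
  have hsplit : ∀ i j, ⟪x i, x j⟫ = (if i < j then ⟪x i, x j⟫ else 0)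
      + (if j < i then ⟪x j, x i⟫ else 0) + (if i = j then ‖x i‖ ^ 2 else 0) := by
    intro i j
    rcases lt_trichotomy i j with h | rfl | h
    · simp [h, h.not_gt, h.ne]
    · simp
    · simp [h, h.not_gt, h.ne', real_inner_comm]
  calc 2 * cost x + ∑ i, ‖x i‖ ^ 2
      = ∑ i, ∑ j, ((if i < j then ⟪x i, x j⟫ else 0) + (if j < i then ⟪x j, x i⟫ else 0)
          + (if i = j then ‖x i‖ ^ 2 else 0)) := by
        simp only [sum_add_distrib]
        rw [sum_comm (f := fun i j => if j < i then ⟪x j, x i⟫ else 0)]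
        simp only [cost, sum_ite_eq, mem_univ, ↓reduceIte]
        ring
    _ = ‖∑ i, x i‖ ^ 2 := by
        rw [← real_inner_self_eq_norm_sq, sum_inner]
        simp_rw [inner_sum, ← hsplit]

lemma cost_add_sum_q_sub {N : ℕ} (x : Fin N → E) (s : E) :
    cost x + ∑ i, q (s - x i) = (N - 1) * q s + q (∑ i, x i - s) := by
  have h := two_mul_cost_add_sum_norm_sq x
  simp only [q_sub, sum_add_distrib, sum_sub_distrib, ← inner_sum, sum_const, card_univ,
    Fintype.card_fin, nsmul_eq_mul, real_inner_comm s]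
  simp only [q, ← mul_sum]
  linarith

lemma sub_one_mul_q_le_cost_add_sum {N : ℕ} (x : Fin N → E) (s : E) :
    (N - 1) * q s ≤ cost x + ∑ i, q (s - x i) := by
  rw [cost_add_sum_q_sub]
  linarith [q_nonneg (∑ i, x i - s)]

end InnerProductSpace

section StrongConvexity

variable {E : Type*} [NormedAddCommGroup E]

/-- Strong convexity with modulus `1`, phrased through real upper bounds so that no arithmetic
with infinite values is involved. -/
def EStronglyConvex [Module ℝ E] (φ : E → EReal) : Prop :=
  ∀ x y : E, ∀ a b α β : ℝ, 0 ≤ a → 0 ≤ b → a + b = 1 → φ x ≤ α → φ y ≤ β →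
    φ (a • x + b • y) ≤ ((a * α + b * β - a * b * q (x - y) : ℝ) : EReal)

variable [NormedSpace ℝ E] {φ : E → EReal}

theorem EStronglyConvex.exists_forall_le [CompleteSpace E] (hφ : EStronglyConvex φ)
    (hlsc : LowerSemicontinuous φ) {m : ℝ} (hm : ∀ x, (m : EReal) ≤ φ x) (hfin : ∃ x, φ x ≠ ⊤) :
    ∃ x₀, ∀ x, φ x₀ ≤ φ x := by
  obtain ⟨x₁, hx₁⟩ := hfin
  set L := ⨅ x, φ x with hL
  have hL_ne_top : L ≠ ⊤ := ne_top_of_le_ne_top hx₁ (iInf_le _ _)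
  have hL_ne_bot : L ≠ ⊥ := ne_bot_of_le_ne_bot (EReal.coe_ne_bot m) (le_iInf hm)
  set μ := L.toReal
  have hLμ : L = μ := (EReal.coe_toReal hL_ne_top hL_ne_bot).symm
  have hz : ∀ n : ℕ, ∃ z, φ z < ((μ + 1 / (n + 1) : ℝ) : EReal) := fun n => by
    rw [← iInf_lt_iff, ← hL, hLμ, EReal.coe_lt_coe_iff]
    exact lt_add_of_pos_right μ Nat.one_div_pos_of_nat
  choose z hz using hz
  have hdist : ∀ n k, dist (z n) (z k) ^ 2 ≤ 4 * (1 / (n + 1) + 1 / (k + 1)) := by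
    intro n k
    have h := (hLμ.symm.trans_le (iInf_le φ _)).trans
      (hφ _ _ (1 / 2) (1 / 2) _ _ (by norm_num) (by norm_num) (by norm_num) (hz n).le (hz k).le)
    rw [EReal.coe_le_coe_iff] at h
    rw [dist_eq_norm]
    simp only [q] at h
    linarith
  have hcauchy : CauchySeq z := by
    refine cauchySeq_of_le_tendsto_0 (fun N : ℕ => √(8 * (1 / (N + 1)))) (fun n k N hn hk => ?_) ?_
    · rw [Real.le_sqrt dist_nonneg (by positivity)]
      linarith [hdist n k, Nat.one_div_le_one_div (α := ℝ) hn, Nat.one_div_le_one_div (α := ℝ) hk]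
    · simpa using ((tendsto_one_div_add_atTop_nhds_zero_nat (𝕜 := ℝ)).const_mul 8).sqrt
  obtain ⟨x₀, hx₀⟩ := cauchySeq_tendsto_of_complete hcauchy
  have hupper : Tendsto (fun n : ℕ => ((μ + 1 / (n + 1) : ℝ) : EReal)) atTop (𝓝 μ) :=
    (continuous_coe_real_ereal.tendsto μ).comp
      (by simpa using tendsto_one_div_add_atTop_nhds_zero_nat.const_add μ)
  have hx₀μ : φ x₀ ≤ μ := by
    by_contra! h
    obtain ⟨t, hμt, htφ⟩ := exists_between h
    obtain ⟨n, h₁, h₂⟩ :=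
      ((hx₀.eventually (hlsc x₀ t htφ)).and (hupper.eventually (gt_mem_nhds hμt))).exists
    exact lt_asymm h₁ ((hz n).trans h₂)
  exact ⟨x₀, fun x => hx₀μ.trans (hLμ.symm.trans_le (iInf_le φ x))⟩

theorem EStronglyConvex.coe_add_q_le_of_forall_le (hφ : EStronglyConvex φ) {x₀ : E} {μ : ℝ}
    (hμ : φ x₀ = μ) (hmin : ∀ x, φ x₀ ≤ φ x) (y : E) :
    ((μ + q (y - x₀) : ℝ) : EReal) ≤ φ y := by
  rcases eq_or_ne (φ y) ⊤ with hy | hy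
  · simp [hy]
  have hβ : φ y = (φ y).toReal := (EReal.coe_toReal hy
    (ne_bot_of_le_ne_bot (EReal.coe_ne_bot μ) (hμ.symm.trans_le (hmin y)))).symm
  set β := (φ y).toReal
  rw [hβ, EReal.coe_le_coe_iff]
  have key : ∀ t ∈ Set.Ioo (0 : ℝ) 1, (1 - t) * q (y - x₀) ≤ β - μ := by
    rintro t ⟨ht₀, ht₁⟩
    have h := (hμ.symm.trans_le (hmin _)).trans
      (hφ y x₀ t (1 - t) β μ ht₀.le (by linarith) (by ring) hβ.le hμ.le)
    rw [EReal.coe_le_coe_iff] at h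
    nlinarith
  have hlim : Tendsto (fun t : ℝ => (1 - t) * q (y - x₀)) (𝓝[>] 0) (𝓝 (q (y - x₀))) := by
    refine tendsto_nhdsWithin_of_tendsto_nhds ?_
    exact ((continuous_const.sub continuous_id).mul continuous_const).tendsto' 0 _ (by simp)
  linarith [le_of_tendsto hlim (eventually_of_mem (Ioo_mem_nhdsGT one_pos) key)]

end StrongConvexity

section Conjugate

variable {E : Type*} [NormedAddCommGroup E] [InnerProductSpace ℝ E] {f : E → EReal}

lemma EConvex.le_coe_of_le (hf : EConvex f) {x y : E} {a b α β : ℝ} (ha : 0 ≤ a) (hb : 0 ≤ b)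
    (hab : a + b = 1) (hx : f x ≤ α) (hy : f y ≤ β) :
    f (a • x + b • y) ≤ ((a * α + b * β : ℝ) : EReal) := by
  refine (hf x y a b ha hb hab).trans ?_
  rw [EReal.coe_add, EReal.coe_mul, EReal.coe_mul]
  exact add_le_add (mul_le_mul_of_nonneg_left hx (EReal.coe_nonneg.2 ha))
    (mul_le_mul_of_nonneg_left hy (EReal.coe_nonneg.2 hb))

theorem EConvex.eStronglyConvex_add_q (hf : EConvex f) (s : E) :
    EStronglyConvex fun x => f x + ((q (s - x) : ℝ) : EReal) := by
  intro x y a b α β ha hb hab hx hy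
  have hle_sub : ∀ {z : E} {γ : ℝ}, f z + ((q (s - z) : ℝ) : EReal) ≤ γ →
      f z ≤ ((γ - q (s - z) : ℝ) : EReal) := fun h => by
    rwa [EReal.coe_sub, EReal.le_sub_iff_add_le (.inl (EReal.coe_ne_bot _))
      (.inl (EReal.coe_ne_top _))]
  have hw : s - (a • x + b • y) = a • (s - x) + b • (s - y) := by
    calc s - (a • x + b • y) = (a + b) • s - (a • x + b • y) := by rw [hab, one_smul]
      _ = a • (s - x) + b • (s - y) := by module
  refine (add_le_add_left (hf.le_coe_of_le ha hb hab (hle_sub hx) (hle_sub hy)) _).trans_eq ?_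
  rw [hw, q_smul_add_smul _ _ hab, ← EReal.coe_add, sub_sub_sub_cancel_left,
    show q (y - x) = q (x - y) by simp only [q, norm_sub_rev]]
  ring_nf

theorem econj_le_of_coe_add_q_le {x₀ : E} {F : ℝ} (s : E)
    (h : ∀ y, ((F + q (s - x₀) + q (y - x₀) : ℝ) : EReal) ≤ f y + ((q (s - y) : ℝ) : EReal)) :
    econj f (s - x₀) ≤ ((⟪s - x₀, x₀⟫ - F : ℝ) : EReal) := by
  refine iSup_le fun y => ?_
  rcases eq_or_ne (f y) ⊤ with hy | hy
  · simp [hy]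
  have hbot : f y ≠ ⊥ := fun hb => by simpa [hb] using h y
  have hG : f y = (f y).toReal := (EReal.coe_toReal hy hbot).symm
  have hy := h y
  rw [hG, ← EReal.coe_add, EReal.coe_le_coe_iff] at hy
  rw [hG, ← EReal.coe_sub, EReal.coe_le_coe_iff]
  have hq : q (s - y) = q (s - x₀) - ⟪s - x₀, y - x₀⟫ + q (y - x₀) := by
    rw [← q_sub, sub_sub_sub_cancel_right]
  rw [inner_sub_right] at hq
  linarith

theorem env_econj_le_of_forall_le (hf : EConvex f) {s x₀ : E} {F : ℝ} (hF : f x₀ = F)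
    (hmin : ∀ x, f x₀ + ((q (s - x₀) : ℝ) : EReal) ≤ f x + ((q (s - x) : ℝ) : EReal)) :
    env (econj f) s ≤ ((q s - (F + q (s - x₀)) : ℝ) : EReal) := by
  have hgrowth := (hf.eStronglyConvex_add_q s).coe_add_q_le_of_forall_le
    (μ := F + q (s - x₀)) (by rw [hF, EReal.coe_add]) hmin
  calc env (econj f) s ≤ econj f (s - x₀) + ((q (s - (s - x₀)) : ℝ) : EReal) := iInf_le _ _
    _ ≤ ((⟪s - x₀, x₀⟫ - F : ℝ) : EReal) + ((q x₀ : ℝ) : EReal) := by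
        rw [sub_sub_cancel]
        exact add_le_add_left (econj_le_of_coe_add_q_le s hgrowth) _
    _ = ((q s - (F + q (s - x₀)) : ℝ) : EReal) := by
        rw [← EReal.coe_add, q_sub, inner_sub_left, real_inner_self_eq_norm_sq]
        unfold q
        ring_nf

theorem exists_env_econj_le [CompleteSpace E] (hf : EConvex f) (hlsc : LowerSemicontinuous f)
    {s : E} {m : ℝ} (hm : ∀ x, (m : EReal) ≤ f x + ((q (s - x) : ℝ) : EReal))
    (hdom : ∃ x, f x ≠ ⊤) :
    ∃ x₀ : E, ∃ F : ℝ, f x₀ = F ∧ env (econj f) s ≤ ((q s - (F + q (s - x₀)) : ℝ) : EReal) := by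
  have hφ : LowerSemicontinuous fun x => f x + ((q (s - x) : ℝ) : EReal) :=
    hlsc.add' (continuous_coe_real_ereal.comp (by unfold q; fun_prop)).lowerSemicontinuous
      fun _ => EReal.continuousAt_add (.inr (EReal.coe_ne_bot _)) (.inr (EReal.coe_ne_top _))
  obtain ⟨a, ha⟩ := hdom
  have hφa : f a + ((q (s - a) : ℝ) : EReal) ≠ ⊤ := EReal.add_ne_top ha (EReal.coe_ne_top _)
  obtain ⟨x₀, hx₀⟩ := (hf.eStronglyConvex_add_q s).exists_forall_le hφ hm ⟨a, hφa⟩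
  have htop : f x₀ ≠ ⊤ := fun h => hφa (by simpa [h] using hx₀ a)
  have hbot : f x₀ ≠ ⊥ := fun h => by simpa [h] using hm x₀
  exact ⟨x₀, _, (EReal.coe_toReal htop hbot).symm,
    env_econj_le_of_forall_le hf (EReal.coe_toReal htop hbot).symm hx₀⟩

theorem coe_sub_le_env_econj {x : E} {c : ℝ} (hx : f x = c) (s : E) :
    ((q s - q (s - x) - c : ℝ) : EReal) ≤ env (econj f) s := by
  refine le_iInf fun u => ?_
  have hconj : ((⟪u, x⟫ - c : ℝ) : EReal) ≤ econj f u := by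
    rw [EReal.coe_sub, ← hx]
    exact le_iSup (fun y => ((⟪u, y⟫ : ℝ) : EReal) - f y) x
  have hthree : q s - q (s - x) - c ≤ ⟪u, x⟫ - c + q (s - u) := by
    linarith [q_nonneg (s - x - u), q_sub (s - x) u, q_sub s u, inner_sub_left (𝕜 := ℝ) s x u,
      real_inner_comm u x]
  calc ((q s - q (s - x) - c : ℝ) : EReal) ≤ ((⟪u, x⟫ - c + q (s - u) : ℝ) : EReal) :=
        EReal.coe_le_coe_iff.2 hthree
    _ ≤ econj f u + ((q (s - u) : ℝ) : EReal) := by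
        rw [EReal.coe_add]
        exact add_le_add_left hconj _

end Conjugate

section Splitting

variable {E : Type*} [NormedAddCommGroup E] [InnerProductSpace ℝ E] {N : ℕ}
  {f : Fin N → E → EReal}

lemma cost_le_sum_of_forall_eq_coe (hc : ∀ x : Fin N → E, ((cost x : ℝ) : EReal) ≤ ∑ i, f i (x i))
    {x : Fin N → E} {c : Fin N → ℝ} (hx : ∀ i, f i (x i) = c i) : cost x ≤ ∑ i, c i := by
  have h := hc x
  simp only [hx] at h
  exact_mod_cast h

theorem exists_forall_coe_le_add_q_of_cost_le
    (hc : ∀ x : Fin N → E, ((cost x : ℝ) : EReal) ≤ ∑ i, f i (x i)) (hbot : ∀ i x, f i x ≠ ⊥)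
    {a : Fin N → E} {A : Fin N → ℝ} (ha : ∀ i, f i (a i) = A i) (s : E) (i : Fin N) :
    ∃ m : ℝ, ∀ x, (m : EReal) ≤ f i x + ((q (s - x) : ℝ) : EReal) := by
  classical
  refine ⟨(N - 1) * q s - ∑ j ∈ univ \ {i}, (A j + q (s - a j)), fun x => ?_⟩
  rcases eq_or_ne (f i x) ⊤ with hx | hx
  · simp [hx]
  have hfx : f i x = (f i x).toReal := (EReal.coe_toReal hx (hbot i x)).symm
  have hcost := cost_le_sum_of_forall_eq_coe hc (x := Function.update a i x)
    (c := Function.update A i (f i x).toReal) fun j => by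
      rcases eq_or_ne j i with rfl | hj
      · rw [Function.update_self, Function.update_self]; exact hfx
      · rw [Function.update_of_ne hj, Function.update_of_ne hj, ha]
  have hq := sub_one_mul_q_le_cost_add_sum (Function.update a i x) s
  simp only [Function.apply_update (fun _ y => q (s - y)),
    sum_update_of_mem (mem_univ i)] at hcost hq
  rw [hfx, ← EReal.coe_add, EReal.coe_le_coe_iff, sum_add_distrib]
  linarith

theorem sum_env_econj_le_of_cost_le [CompleteSpace E]
    (hproper : ∀ i, (∃ x, f i x ≠ ⊤) ∧ ∀ x, f i x ≠ ⊥) (hlsc : ∀ i, LowerSemicontinuous (f i))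
    (hconv : ∀ i, EConvex (f i))
    (hc : ∀ x : Fin N → E, ((cost x : ℝ) : EReal) ≤ ∑ i, f i (x i)) (s : E) :
    ∑ i, env (econj (f i)) s ≤ ((q s : ℝ) : EReal) := by
  choose a ha using fun i => (hproper i).1
  have hA i : f i (a i) = (f i (a i)).toReal := (EReal.coe_toReal (ha i) ((hproper i).2 _)).symm
  choose m hm using exists_forall_coe_le_add_q_of_cost_le hc (fun i => (hproper i).2) hA s
  choose x₀ F hF henv using fun i => exists_env_econj_le (hconv i) (hlsc i) (hm i) ⟨a i, ha i⟩
  have hcost := cost_le_sum_of_forall_eq_coe hc hF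
  have hq := sub_one_mul_q_le_cost_add_sum x₀ s
  calc ∑ i, env (econj (f i)) s ≤ ∑ i, ((q s - (F i + q (s - x₀ i)) : ℝ) : EReal) :=
        sum_le_sum fun i _ => henv i
    _ ≤ ((q s : ℝ) : EReal) := by
        norm_cast
        simp only [sum_sub_distrib, sum_add_distrib, sum_const, card_univ, Fintype.card_fin,
          nsmul_eq_mul]
        linarith

theorem cost_le_sum_of_sum_env_econj_le (hbot : ∀ i x, f i x ≠ ⊥)
    (he : ∀ s : E, ∑ i, env (econj (f i)) s ≤ ((q s : ℝ) : EReal)) (x : Fin N → E) :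
    ((cost x : ℝ) : EReal) ≤ ∑ i, f i (x i) := by
  by_cases htop : ∃ i, f i (x i) = ⊤
  · obtain ⟨i, hi⟩ := htop
    rw [EReal.finset_sum_eq_top (fun j _ => hbot j _) (mem_univ i) hi]
    exact le_top
  have hc i : f i (x i) = (f i (x i)).toReal :=
    (EReal.coe_toReal (not_exists.1 htop i) (hbot i _)).symm
  have hsum : ∑ i, (q (∑ j, x j) - q (∑ j, x j - x i) - (f i (x i)).toReal) ≤ q (∑ j, x j) := by
    exact_mod_cast (sum_le_sum fun i _ => coe_sub_le_env_econj (hc i) _).trans (he _)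
  have hid := cost_add_sum_q_sub x (∑ j, x j)
  rw [sub_self, q_zero] at hid
  simp only [sum_sub_distrib, sum_const, card_univ, Fintype.card_fin, nsmul_eq_mul] at hsum
  rw [sum_congr rfl fun i _ => hc i]
  exact_mod_cast (by linarith : cost x ≤ ∑ i, (f i (x i)).toReal)

end Splitting

theorem cost_le_splitting_iff_envelope_ineq_general {N : ℕ}
    (f : Fin N → H → EReal)
    (hproper : ∀ i, (∃ x, f i x ≠ ⊤) ∧ ∀ x, f i x ≠ ⊥)
    (hlsc : ∀ i, LowerSemicontinuous (f i))
    (hconv : ∀ i, EConvex (f i)) :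
    (∀ x : Fin N → H, ((cost x : ℝ) : EReal) ≤ ∑ i, f i (x i)) ↔
    (∀ s : H, ∑ i, env (econj (f i)) s ≤ ((q s : ℝ) : EReal)) :=
  ⟨sum_env_econj_le_of_cost_le hproper hlsc hconv,
    cost_le_sum_of_sum_env_econj_le fun i => (hproper i).2⟩

theorem cost_le_splitting_iff_envelope_ineq {N : ℕ} (hN : 2 ≤ N)
    (f : Fin N → H → EReal)
    (hproper : ∀ i, (∃ x, f i x ≠ ⊤) ∧ ∀ x, f i x ≠ ⊥)
    (hlsc : ∀ i, LowerSemicontinuous (f i))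
    (hconv : ∀ i, EConvex (f i)) :
    (∀ x : Fin N → H, ((cost x : ℝ) : EReal) ≤ ∑ i, f i (x i)) ↔
    (∀ s : H, ∑ i, env (econj (f i)) s ≤ ((q s : ℝ) : EReal)) :=
  cost_le_splitting_iff_envelope_ineq_general f hproper hlsc hconv
end
end

section
/- In ℝ^d with N marginals: let Q₁,...,Q_N be symmetric positive definite pairwise commuting d×d matrices, M_i = (Σ_{k≠i} Q_k)Q_i^{-1}, and q_{M_i}(x) = ½⟨x, M_i x⟩. Then Σ_{i<j}⟨x_i,x_j⟩ ≤ Σ_i q_{M_i}(x_i) for all (x₁,...,x_N) ∈ (ℝ^d)^N, with equality if and only if there exists v ∈ ℝ^d with x_i = Q_i v for all i. -/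
/-!
Write `x i = Q i *ᵥ u i`. Since `Q i` is symmetric and the `Q i` commute, the right-hand side
minus the left-hand side becomes `∑_{i<j} ½ ⟨u i - u j, Q i Q j (u i - u j)⟩`, and `Q i Q j` is
positive definite as a product of commuting positive definite matrices. Hence the difference
is nonnegative, and it vanishes exactly when all `u i` coincide.
-/

open Matrix Finset

theorem Finset.sum_sum_erase_eq_sum_sum_lt {ι M : Type*} [Fintype ι] [LinearOrder ι]
    [AddCommMonoid M] (f : ι → ι → M) :
    ∑ i, ∑ k ∈ univ.erase i, f i k = ∑ i, ∑ j, if i < j then f i j + f j i else 0 := by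
  have hsplit : ∀ i, ∑ k ∈ univ.erase i, f i k
      = ∑ k, ((if i < k then f i k else 0) + if k < i then f i k else 0) := fun i => by
    rw [← filter_ne', sum_filter]
    refine sum_congr rfl fun k _ => ?_
    rcases lt_trichotomy i k with h | rfl | h
    · simp [h, h.ne', not_lt_of_gt h]
    · simp
    · simp [h, h.ne, not_lt_of_gt h]
  simp_rw [hsplit, sum_add_distrib]
  rw [sum_comm (f := fun i k => if k < i then f i k else 0)]
  simp_rw [← sum_add_distrib, ite_add_ite, add_zero]

section Symmetric

variable {n R : Type*} [Fintype n] [CommRing R] {A : Matrix n n R}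

theorem Matrix.IsSymm.mulVec_dotProduct_mulVec (hA : A.IsSymm) (B : Matrix n n R) (a b : n → R) :
    A *ᵥ a ⬝ᵥ B *ᵥ b = a ⬝ᵥ (A * B) *ᵥ b := by
  rw [← mulVec_mulVec, dotProduct_mulVec a A, ← mulVec_transpose, hA.eq]

theorem Matrix.IsSymm.sub_dotProduct_mulVec_sub (hA : A.IsSymm) (a b : n → R) :
    (a - b) ⬝ᵥ A *ᵥ (a - b) = a ⬝ᵥ A *ᵥ a + b ⬝ᵥ A *ᵥ b - 2 * (a ⬝ᵥ A *ᵥ b) := by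
  have hcomm : b ⬝ᵥ A *ᵥ a = a ⬝ᵥ A *ᵥ b := by
    rw [dotProduct_mulVec, ← mulVec_transpose, hA.eq, dotProduct_comm]
  rw [mulVec_sub, sub_dotProduct, dotProduct_sub, dotProduct_sub, hcomm]
  ring

end Symmetric

section PosDef

variable {n : Type*} [Fintype n] {A B : Matrix n n ℝ}

open scoped MatrixOrder in
theorem Matrix.PosDef.mul_of_commute [DecidableEq n] (hA : A.PosDef) (hB : B.PosDef)
    (h : Commute A B) : (A * B).PosDef :=
  ((hA.isStrictlyPositive.commute_iff hB.isStrictlyPositive).mp h).posDef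

theorem Matrix.PosDef.dotProduct_mulVec_self_nonneg (hA : A.PosDef) (x : n → ℝ) :
    0 ≤ x ⬝ᵥ A *ᵥ x := by
  simpa using hA.posSemidef.dotProduct_mulVec_nonneg x

theorem Matrix.PosDef.dotProduct_mulVec_self_eq_zero_iff (hA : A.PosDef) {x : n → ℝ} :
    x ⬝ᵥ A *ᵥ x = 0 ↔ x = 0 := by
  refine ⟨fun h => by_contra fun hx => ?_, by rintro rfl; simp⟩
  simpa [h] using hA.dotProduct_mulVec_pos hx

end PosDef

section Splitting

variable {ι n : Type*} [Fintype n]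

noncomputable def pairGap (Q : ι → Matrix n n ℝ) (u : ι → n → ℝ) (i j : ι) : ℝ :=
  (1 / 2) * ((u i - u j) ⬝ᵥ (Q i * Q j) *ᵥ (u i - u j))

section PairGap

variable [DecidableEq n] {Q : ι → Matrix n n ℝ} {i j : ι}

theorem pairGap_nonneg (hi : (Q i).PosDef) (hj : (Q j).PosDef) (hij : Commute (Q i) (Q j))
    (u : ι → n → ℝ) : 0 ≤ pairGap Q u i j :=
  mul_nonneg (by norm_num) ((hi.mul_of_commute hj hij).dotProduct_mulVec_self_nonneg _)

theorem pairGap_eq_zero_iff (hi : (Q i).PosDef) (hj : (Q j).PosDef) (hij : Commute (Q i) (Q j))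
    (u : ι → n → ℝ) : pairGap Q u i j = 0 ↔ u i = u j := by
  rw [pairGap, mul_eq_zero, (hi.mul_of_commute hj hij).dotProduct_mulVec_self_eq_zero_iff,
    sub_eq_zero]
  norm_num

end PairGap

variable [Fintype ι] [LinearOrder ι]

noncomputable def splittingGap (Q : ι → Matrix n n ℝ) (u : ι → n → ℝ) : ℝ :=
  ∑ i, ∑ j, if i < j then pairGap Q u i j else 0

theorem sum_lt_dotProduct_add_splittingGap (Q : ι → Matrix n n ℝ) (hQ : ∀ i, (Q i).IsSymm)
    (hQc : ∀ i j, Commute (Q i) (Q j)) (u : ι → n → ℝ) :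
    (∑ i, ∑ j, if i < j then Q i *ᵥ u i ⬝ᵥ Q j *ᵥ u j else 0) + splittingGap Q u
      = ∑ i, (1 / 2) * (Q i *ᵥ u i ⬝ᵥ (∑ k ∈ univ.erase i, Q k) *ᵥ u i) := by
  have hrhs : ∀ i, (1 / 2) * (Q i *ᵥ u i ⬝ᵥ (∑ k ∈ univ.erase i, Q k) *ᵥ u i)
      = ∑ k ∈ univ.erase i, (1 / 2) * (u i ⬝ᵥ (Q i * Q k) *ᵥ u i) := fun i => by
    simp_rw [sum_mulVec, dotProduct_sum, mul_sum, (hQ i).mulVec_dotProduct_mulVec]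
  simp_rw [hrhs, sum_sum_erase_eq_sum_sum_lt, splittingGap, ← sum_add_distrib]
  refine sum_congr rfl fun i _ => sum_congr rfl fun j _ => ?_
  split_ifs
  · have hsymm : (Q i * Q j).IsSymm := by
      rw [IsSymm, transpose_mul, (hQ i).eq, (hQ j).eq, (hQc i j).eq]
    rw [pairGap, (hQ i).mulVec_dotProduct_mulVec, hsymm.sub_dotProduct_mulVec_sub, (hQc j i).eq]
    ring
  · simp

variable [DecidableEq n] {Q : ι → Matrix n n ℝ}

theorem splittingGap_nonneg (hQ : ∀ i, (Q i).PosDef) (hQc : ∀ i j, Commute (Q i) (Q j))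
    (u : ι → n → ℝ) : 0 ≤ splittingGap Q u :=
  sum_nonneg fun i _ => sum_nonneg fun j _ =>
    ite_nonneg (pairGap_nonneg (hQ i) (hQ j) (hQc i j) u) le_rfl

theorem splittingGap_eq_zero_iff (hQ : ∀ i, (Q i).PosDef) (hQc : ∀ i j, Commute (Q i) (Q j))
    (u : ι → n → ℝ) : splittingGap Q u = 0 ↔ ∃ v, ∀ i, u i = v := by
  have hterm_nonneg : ∀ i j, 0 ≤ if i < j then pairGap Q u i j else 0 := fun i j =>
    ite_nonneg (pairGap_nonneg (hQ i) (hQ j) (hQc i j) u) le_rfl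
  constructor
  · intro h
    rw [splittingGap, sum_eq_zero_iff_of_nonneg fun i _ => sum_nonneg fun j _ => hterm_nonneg i j]
      at h
    have hlt : ∀ i j, i < j → u i = u j := fun i j hij => by
      have := (sum_eq_zero_iff_of_nonneg fun j _ => hterm_nonneg i j).mp (h i (mem_univ i)) j
        (mem_univ j)
      rwa [if_pos hij, pairGap_eq_zero_iff (hQ i) (hQ j) (hQc i j)] at this
    have hall : ∀ i j, u i = u j := fun i j => by
      rcases lt_trichotomy i j with h | rfl | h
      exacts [hlt i j h, rfl, (hlt j i h).symm]
    rcases isEmpty_or_nonempty ι with hι | ⟨⟨i₀⟩⟩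
    · exact ⟨0, isEmptyElim⟩
    · exact ⟨u i₀, fun i => hall i i₀⟩
  · rintro ⟨v, hv⟩
    refine sum_eq_zero fun i _ => sum_eq_zero fun j _ => ?_
    rw [(pairGap_eq_zero_iff (hQ i) (hQ j) (hQc i j) u).mpr ((hv i).trans (hv j).symm), ite_self]

end Splitting

theorem quadratic_splitting_general {d N : ℕ}
    (Q : Fin N → Matrix (Fin d) (Fin d) ℝ)
    (hpd : ∀ i, (Q i).PosDef)
    (hcomm : ∀ i j, Q i * Q j = Q j * Q i) :
    ∀ x : Fin N → (Fin d → ℝ),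
      ((∑ i : Fin N, ∑ j : Fin N, if i < j then x i ⬝ᵥ x j else 0)
        ≤ ∑ i : Fin N,
            (1 / 2) * (x i ⬝ᵥ ((∑ k ∈ Finset.univ.erase i, Q k) * (Q i)⁻¹).mulVec (x i))) ∧
      (((∑ i : Fin N, ∑ j : Fin N, if i < j then x i ⬝ᵥ x j else 0)
          = ∑ i : Fin N,
              (1 / 2) * (x i ⬝ᵥ ((∑ k ∈ Finset.univ.erase i, Q k) * (Q i)⁻¹).mulVec (x i)))
        ↔ ∃ v : Fin d → ℝ, ∀ i, x i = (Q i).mulVec v) := by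
  intro x
  have hdet : ∀ i, IsUnit (Q i).det := fun i => (hpd i).det_pos.ne'.isUnit
  obtain ⟨u, rfl⟩ : ∃ u : Fin N → Fin d → ℝ, x = fun i => Q i *ᵥ u i :=
    ⟨fun i => (Q i)⁻¹ *ᵥ x i, funext fun i => by
      rw [mulVec_mulVec, mul_nonsing_inv _ (hdet i), one_mulVec]⟩
  have hM : ∀ i, ((∑ k ∈ univ.erase i, Q k) * (Q i)⁻¹) *ᵥ (Q i *ᵥ u i)
      = (∑ k ∈ univ.erase i, Q k) *ᵥ u i := fun i => by
    rw [mulVec_mulVec, mul_assoc, nonsing_inv_mul _ (hdet i), mul_one]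
  have hinj : ∀ v, (∀ i, Q i *ᵥ u i = Q i *ᵥ v) ↔ ∀ i, u i = v := fun v =>
    forall_congr' fun i => (mulVec_injective_iff_isUnit.mpr (hpd i).isUnit).eq_iff
  simp only [hM, hinj]
  have hsym : ∀ i, (Q i).IsSymm := fun i => isHermitian_iff_isSymm.mp (hpd i).isHermitian
  rw [← sum_lt_dotProduct_add_splittingGap Q hsym hcomm u, left_eq_add,
    splittingGap_eq_zero_iff hpd hcomm]
  exact ⟨le_add_of_nonneg_right (splittingGap_nonneg hpd hcomm u), Iff.rfl⟩

/-- Quadratic `c`-splitting tuple for commuting positive definite matrices: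
`∑_{i<j} ⟨x_i, x_j⟩ ≤ ∑_i ½⟨x_i, M_i x_i⟩` with `M_i = (∑_{k≠i} Q_k) Q_i⁻¹`,
with equality iff `x_i = Q_i v` for some common `v`. -/
theorem quadratic_splitting {d N : ℕ} (hN : 2 ≤ N)
    (Q : Fin N → Matrix (Fin d) (Fin d) ℝ)
    (hsym : ∀ i, (Q i).IsSymm) (hpd : ∀ i, (Q i).PosDef)
    (hcomm : ∀ i j, Q i * Q j = Q j * Q i) :
    ∀ x : Fin N → (Fin d → ℝ),
      ((∑ i : Fin N, ∑ j : Fin N, if i < j then x i ⬝ᵥ x j else 0)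
        ≤ ∑ i : Fin N,
            (1 / 2) * (x i ⬝ᵥ ((∑ k ∈ Finset.univ.erase i, Q k) * (Q i)⁻¹).mulVec (x i))) ∧
      (((∑ i : Fin N, ∑ j : Fin N, if i < j then x i ⬝ᵥ x j else 0)
          = ∑ i : Fin N,
              (1 / 2) * (x i ⬝ᵥ ((∑ k ∈ Finset.univ.erase i, Q k) * (Q i)⁻¹).mulVec (x i)))
        ↔ ∃ v : Fin d → ℝ, ∀ i, x i = (Q i).mulVec v) :=
  quadratic_splitting_general Q hpd hcomm
end

section
/- Let A: H ⇉ H be a maximally monotone relation and N ≥ 3. Define Γ = {(x₁, x₂, 0, ..., 0) ∈ H^N : (x₁,x₂) ∈ graph A}. Then Γ is maximally c-monotone for c(x₁,...,x_N) = Σ_{i<j}⟨x_i,x_j⟩: Γ is c-monotone, and any u ∈ H^N with Γ ∪ {u} c-monotone belongs to Γ. -/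
open scoped RealInnerProductSpace BigOperators

noncomputable section

variable {H : Type*} [NormedAddCommGroup H] [InnerProductSpace ℝ H] [CompleteSpace H]

/-! A maximally monotone `A` is unbounded along every direction `(e, e)`: shifting a point of `A`
far enough along `(e, e)` keeps it monotonically related to all of `A`, hence in `A`. Testing the
`c`-monotonicity of `Γ ∪ {u}` against the singletons `K = {k}` therefore forces `u k = 0` for
`k ≠ 0, 1`, and then `K = {0}` says that `(u 0, u 1)` is monotonically related to `A`. -/

section

variable {ι M : Type*} [DecidableEq ι] [AddCommMonoid M]

lemma Finset.sum_single_add_single (K : Finset ι) (i j : ι) (a b : M) :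
    ∑ k ∈ K, (Pi.single i a + Pi.single j b : ι → M) k =
      (if i ∈ K then a else 0) + (if j ∈ K then b else 0) := by
  simp only [Pi.add_apply, Finset.sum_add_distrib, Finset.sum_pi_single']

lemma Pi.eq_single_add_single {i j : ι} (hij : i ≠ j) {x : ι → M}
    (hx : ∀ k, k ≠ i → k ≠ j → x k = 0) : x = Pi.single i (x i) + Pi.single j (x j) := by
  funext k
  by_cases hki : k = i
  · subst hki; simp [hij]
  by_cases hkj : k = j
  · subst hkj; simp [hki]
  simp [hki, hkj, hx k hki hkj]

def twoMarginalEmbedding {N : ℕ} (A : Set (M × M)) (i j : Fin N) : Set (Fin N → M) :=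
  {x | (x i, x j) ∈ A ∧ ∀ k, k ≠ i → k ≠ j → x k = 0}

lemma single_add_single_mem_twoMarginalEmbedding {N : ℕ} {A : Set (M × M)} {i j : Fin N}
    (hij : i ≠ j) {a b : M} (hab : (a, b) ∈ A) :
    Pi.single i a + Pi.single j b ∈ twoMarginalEmbedding A i j :=
  ⟨by simpa [hij, hij.symm] using hab, fun k hki hkj => by simp [hki, hkj]⟩

end

variable {E : Type*} [NormedAddCommGroup E] [InnerProductSpace ℝ E]

lemma inner_sum_sum_compl_single_add_single {ι : Type*} [Fintype ι] [DecidableEq ι] (i j : ι)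
    (a b : E) (K : Finset ι) :
    ⟪∑ k ∈ K, (Pi.single i a + Pi.single j b : ι → E) k,
        ∑ k ∈ Kᶜ, (Pi.single i a + Pi.single j b : ι → E) k⟫ =
      if (i ∈ K ↔ j ∈ K) then 0 else ⟪a, b⟫ := by
  simp only [Finset.sum_single_add_single, Finset.mem_compl]
  by_cases hi : i ∈ K <;> by_cases hj : j ∈ K <;> simp [hi, hj, real_inner_comm]

namespace MaxMonoRel

variable {A : Set (E × E)}

lemma nonempty (hA : MaxMonoRel A) : A.Nonempty := by
  by_contra h
  exact h ⟨_, hA.2 (0, 0) fun q hq => (h ⟨q, hq⟩).elim⟩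

lemma add_mem_of_inner_le (hA : MaxMonoRel A) {x y e : E} (hxy : (x, y) ∈ A)
    (he : ∀ q ∈ A, ⟪e, q.1 + q.2 - (x + y)⟫ ≤ ‖e‖ ^ 2) : (x + e, y + e) ∈ A := by
  refine hA.2 _ fun q hq => ?_
  have hshift : ⟪x + e - q.1, y + e - q.2⟫ =
      ⟪x - q.1, y - q.2⟫ + (‖e‖ ^ 2 - ⟪e, q.1 + q.2 - (x + y)⟫) := by
    simp only [inner_add_left, inner_add_right, inner_sub_left, inner_sub_right,
      real_inner_self_eq_norm_sq]
    rw [real_inner_comm x e, real_inner_comm q.1 e]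
    ring
  rw [hshift]
  linarith [hA.1 _ hxy q hq, he q hq]

lemma eq_zero_of_forall_inner_le (hA : MaxMonoRel A) {e : E} {β : ℝ}
    (h : ∀ p ∈ A, ⟪e, p.1 + p.2⟫ ≤ β) : e = 0 := by
  obtain ⟨⟨x, y⟩, hxy⟩ := hA.nonempty
  by_contra he
  have hpos : 0 < ‖e‖ ^ 2 := by positivity
  -- `t ‖e‖²` must dominate `β - ⟪e, x + y⟫` from above (for membership) and from below
  -- (for the contradiction)
  set t := (|β - ⟪e, x + y⟫| + 1) / ‖e‖ ^ 2
  have ht : t * ‖e‖ ^ 2 = |β - ⟪e, x + y⟫| + 1 := div_mul_cancel₀ _ hpos.ne'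
  have ht0 : 0 ≤ t := by positivity
  have hmem : (x + t • e, y + t • e) ∈ A := by
    refine hA.add_mem_of_inner_le hxy fun q hq => ?_
    rw [real_inner_smul_left, inner_sub_right, norm_smul, mul_pow, Real.norm_eq_abs, sq_abs]
    have : β - ⟪e, x + y⟫ ≤ |β - ⟪e, x + y⟫| := le_abs_self _
    nlinarith [h q hq]
  have hfar := h _ hmem
  rw [show x + t • e + (y + t • e) = x + y + (2 * t) • e by module, inner_add_right,
    real_inner_smul_right, real_inner_self_eq_norm_sq, mul_assoc, ht] at hfar
  linarith [le_abs_self (β - ⟪e, x + y⟫), abs_nonneg (β - ⟪e, x + y⟫)]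

end MaxMonoRel

section TwoMarginalEmbedding

variable {N : ℕ} {A : Set (E × E)} {i j : Fin N}

lemma cMono_twoMarginalEmbedding (hA : MonoRel A) (hij : i ≠ j) :
    CMono (twoMarginalEmbedding A i j) := by
  rintro u ⟨huA, hu⟩ v ⟨hvA, hv⟩ K - -
  have hdiff : u - v = Pi.single i (u i - v i) + Pi.single j (u j - v j) :=
    Pi.eq_single_add_single hij fun k hki hkj => by simp [hu k hki hkj, hv k hki hkj]
  have := inner_sum_sum_compl_single_add_single i j (u i - v i) (u j - v j) K
  simp only [← hdiff, Pi.sub_apply] at this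
  rw [this]
  split_ifs
  exacts [le_rfl, hA _ huA _ hvA]

lemma forall_ne_eq_zero_of_cMono_union (hA : MaxMonoRel A) (hij : i ≠ j) {u : Fin N → E}
    (hu : CMono (twoMarginalEmbedding A i j ∪ {u})) : ∀ k, k ≠ i → k ≠ j → u k = 0 := by
  intro k hki hkj
  refine hA.eq_zero_of_forall_inner_le (β := ⟪u k, ∑ l ∈ {k}ᶜ, u l⟫) fun p hp => ?_
  have hv := single_add_single_mem_twoMarginalEmbedding hij hp
  have hK : ({k} : Finset (Fin N)) ≠ Finset.univ := fun hK =>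
    hki (Finset.mem_singleton.mp (hK ▸ Finset.mem_univ i)).symm
  have hc := hu u (Or.inr rfl) _ (Or.inl hv) {k} (Finset.singleton_nonempty k) hK
  rw [Finset.sum_singleton, Finset.sum_sub_distrib, Finset.sum_single_add_single] at hc
  simp only [Finset.mem_compl, Finset.mem_singleton, Ne.symm hki, Ne.symm hkj, not_false_eq_true,
    if_true, Pi.add_apply, Pi.single_eq_of_ne hki, Pi.single_eq_of_ne hkj, add_zero,
    sub_zero, inner_sub_right] at hc
  linarith

lemma mem_twoMarginalEmbedding_of_cMono_union (hA : MaxMonoRel A) (hij : i ≠ j) {u : Fin N → E}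
    (hu : CMono (twoMarginalEmbedding A i j ∪ {u})) : u ∈ twoMarginalEmbedding A i j := by
  have hsupp := forall_ne_eq_zero_of_cMono_union hA hij hu
  refine ⟨hA.2 _ fun q hq => ?_, hsupp⟩
  have hK : ({i} : Finset (Fin N)) ≠ Finset.univ := fun hK =>
    hij (Finset.mem_singleton.mp (hK ▸ Finset.mem_univ j)).symm
  have hc := hu u (Or.inr rfl) _ (Or.inl (single_add_single_mem_twoMarginalEmbedding hij hq)) {i}
    (Finset.singleton_nonempty i) hK
  have hdiff : u - (Pi.single i q.1 + Pi.single j q.2) =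
      Pi.single i (u i - q.1) + Pi.single j (u j - q.2) :=
    (Pi.eq_single_add_single hij fun k hki hkj => by simp [hsupp k hki hkj, hki, hkj]).trans
      (by simp [hij, hij.symm])
  simp only [← Pi.sub_apply, hdiff, inner_sum_sum_compl_single_add_single] at hc
  simpa [hij.symm] using hc

end TwoMarginalEmbedding

/-- The trivial embedding of a maximally monotone relation into the multi-marginal
setting is maximally `c`-monotone. -/
theorem trivial_embedding_max_c_monotone {N : ℕ} (hN : 3 ≤ N) (A : Set (H × H))
    (hA : MaxMonoRel A) :
    CMono {x : Fin N → H |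
        (x ⟨0, by omega⟩, x ⟨1, by omega⟩) ∈ A ∧
        ∀ i : Fin N, i ≠ ⟨0, by omega⟩ → i ≠ ⟨1, by omega⟩ → x i = 0} ∧
    ∀ u : Fin N → H,
      CMono ({x : Fin N → H |
          (x ⟨0, by omega⟩, x ⟨1, by omega⟩) ∈ A ∧
          ∀ i : Fin N, i ≠ ⟨0, by omega⟩ → i ≠ ⟨1, by omega⟩ → x i = 0} ∪ {u}) →
      u ∈ {x : Fin N → H |
          (x ⟨0, by omega⟩, x ⟨1, by omega⟩) ∈ A ∧
          ∀ i : Fin N, i ≠ ⟨0, by omega⟩ → i ≠ ⟨1, by omega⟩ → x i = 0} := by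
  have h01 : (⟨0, by omega⟩ : Fin N) ≠ ⟨1, by omega⟩ := by simp
  exact ⟨cMono_twoMarginalEmbedding hA.1 h01,
    fun u hu => mem_twoMarginalEmbedding_of_cMono_union hA h01 hu⟩
end
end

section
/- Let Γ ⊆ H^N be n-c-cyclically monotone for the cost c(x₁,...,x_N) = Σ_{i<j}⟨x_i,x_j⟩. Then for each index i₀, the relation A_{i₀} = {(x_{i₀}, Σ_{i≠i₀} x_i) : x ∈ Γ} ⊆ H × H is n-cyclically monotone. -/
/-!
Separating the terms that involve the coordinate `i₀`, the cost is
`c(x) = ⟪x_{i₀}, ∑_{i≠i₀} x_i⟫ + (terms without x_{i₀})`. Permuting only the `i₀`-th marginal of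
`x¹, …, xⁿ` (by `σ⁻¹`) therefore changes the total cost by exactly
`∑_j ⟪x^{σ⁻¹ j}_{i₀} - x^j_{i₀}, ∑_{i≠i₀} x^j_i⟫`, and `n`-`c`-cyclical monotonicity says this is `≤ 0`,
which after reindexing is the `n`-cyclical monotonicity of `A_{i₀}`.
-/

open scoped RealInnerProductSpace BigOperators

noncomputable section

variable {H : Type*} [NormedAddCommGroup H] [InnerProductSpace ℝ H] [CompleteSpace H]

open Finset

section

variable {E : Type*} [NormedAddCommGroup E] [InnerProductSpace ℝ E] {N : ℕ}

theorem cost_eq_sum_erase_add_inner (i₀ : Fin N) (x : Fin N → E) :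
    cost x = (∑ i ∈ univ.erase i₀, ∑ j ∈ univ.erase i₀, if i < j then ⟪x i, x j⟫ else 0)
      + ⟪x i₀, ∑ i ∈ univ.erase i₀, x i⟫ := by
  have hpair : ∀ i ∈ univ.erase i₀,
      ((if i₀ < i then ⟪x i₀, x i⟫ else 0) + if i < i₀ then ⟪x i, x i₀⟫ else 0)
        = ⟪x i₀, x i⟫ := by
    intro i hi
    rcases (ne_of_mem_erase hi).lt_or_gt with h | h
    · simp [h, h.not_gt, real_inner_comm]
    · simp [h, h.not_gt]
  unfold cost
  simp_rw [← add_sum_erase univ _ (mem_univ i₀), lt_irrefl, if_false, zero_add, sum_add_distrib,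
    inner_sum, ← sum_congr rfl hpair, sum_add_distrib]
  ring

theorem cost_update (y : Fin N → E) (i₀ : Fin N) (v : E) :
    cost (Function.update y i₀ v) = cost y + ⟪v - y i₀, ∑ i ∈ univ.erase i₀, y i⟫ := by
  have hoff : ∀ i ∈ univ.erase i₀, Function.update y i₀ v i = y i :=
    fun i hi => Function.update_of_ne (ne_of_mem_erase hi) v y
  rw [cost_eq_sum_erase_add_inner i₀, cost_eq_sum_erase_add_inner i₀ y, Function.update_self,
    sum_congr rfl hoff, inner_sub_left,
    sum_congr rfl fun i hi => sum_congr rfl fun j hj => by rw [hoff i hi, hoff j hj]]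
  ring

end

theorem AK_n_cyclically_monotone_general {N n : ℕ}
    (Γ : Set (Fin N → H))
    (hΓ : ∀ x : Fin n → (Fin N → H), (∀ j, x j ∈ Γ) →
      ∀ σ : Fin N → Equiv.Perm (Fin n),
        ∑ j : Fin n, cost (fun i => x (σ i j) i) ≤ ∑ j : Fin n, cost (x j))
    (i₀ : Fin N) :
    ∀ x : Fin n → (Fin N → H), (∀ j, x j ∈ Γ) →
      ∀ σ : Equiv.Perm (Fin n),
        ∑ j : Fin n, ⟪x j i₀, ∑ i ∈ Finset.univ.erase i₀, x (σ j) i⟫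
          ≤ ∑ j : Fin n, ⟪x j i₀, ∑ i ∈ Finset.univ.erase i₀, x j i⟫ := by
  intro x hx σ
  set τ : Fin N → Equiv.Perm (Fin n) := Function.update 1 i₀ σ⁻¹
  have hcolumn : ∀ j, (fun i => x (τ i j) i) = Function.update (x j) i₀ (x (σ⁻¹ j) i₀) := by
    intro j
    funext i
    rcases eq_or_ne i i₀ with rfl | hi <;> simp [τ, *]
  have hmono := hΓ x hx τ
  simp_rw [hcolumn, cost_update, sum_add_distrib, add_le_iff_nonpos_right, inner_sub_left,
    sum_sub_distrib, sub_nonpos] at hmono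
  calc ∑ j, ⟪x j i₀, ∑ i ∈ univ.erase i₀, x (σ j) i⟫
      = ∑ j, ⟪x (σ⁻¹ j) i₀, ∑ i ∈ univ.erase i₀, x j i⟫ := by
        rw [← Equiv.sum_comp σ fun j => ⟪x (σ⁻¹ j) i₀, ∑ i ∈ univ.erase i₀, x j i⟫]
        simp
    _ ≤ _ := hmono

/-- If `Γ` is `n`-`c`-cyclically monotone, then for each index `i₀` the relation
`A_{i₀} = {(x_{i₀}, ∑_{i≠i₀} x_i) : x ∈ Γ}` is `n`-cyclically monotone. -/
theorem AK_n_cyclically_monotone {N n : ℕ} (hN : 2 ≤ N) (hn : 2 ≤ n)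
    (Γ : Set (Fin N → H))
    (hΓ : ∀ x : Fin n → (Fin N → H), (∀ j, x j ∈ Γ) →
      ∀ σ : Fin N → Equiv.Perm (Fin n),
        ∑ j : Fin n, cost (fun i => x (σ i j) i) ≤ ∑ j : Fin n, cost (x j))
    (i₀ : Fin N) :
    ∀ x : Fin n → (Fin N → H), (∀ j, x j ∈ Γ) →
      ∀ σ : Equiv.Perm (Fin n),
        ∑ j : Fin n, ⟪x j i₀, ∑ i ∈ Finset.univ.erase i₀, x (σ j) i⟫
          ≤ ∑ j : Fin n, ⟪x j i₀, ∑ i ∈ Finset.univ.erase i₀, x j i⟫ :=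
  AK_n_cyclically_monotone_general Γ hΓ i₀
end
end

section
/- In ℝ², let θ ∈ (arccos(1/√2), arccos(1/√(2n))], α = 1/(2n cos θ), R_θ the rotation by θ. Then: (a) αR_θ and αR_{-θ} are firmly nonexpansive; (b) nαR_θ and nαR_{-θ} are not firmly nonexpansive; (c) nαR_θ + nαR_{-θ} = Id. -/
noncomputable section

/-- Counterclockwise rotation by `θ` in `ℝ²`. -/
def Rot (θ : ℝ) (x : Fin 2 → ℝ) : Fin 2 → ℝ :=
  ![Real.cos θ * x 0 - Real.sin θ * x 1, Real.sin θ * x 0 + Real.cos θ * x 1]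

/-- Squared Euclidean norm on `ℝ²`. -/
def ns (x : Fin 2 → ℝ) : ℝ := x 0 ^ 2 + x 1 ^ 2

/-- `T : ℝ² → ℝ²` is firmly nonexpansive. -/
def FNE (T : (Fin 2 → ℝ) → Fin 2 → ℝ) : Prop :=
  ∀ x y : Fin 2 → ℝ, ns (T x - T y) + ns ((x - T x) - (y - T y)) ≤ ns (x - y)

/-! For `T = a • R_θ` one has `⟨T x, x - T x⟩ = a (cos θ - a) ‖x‖²`, so for `a > 0` the map `T` is
firmly nonexpansive iff `a ≤ cos θ`. The bounds on `θ` say `1 / (2n) ≤ cos² θ < 1 / 2`, that is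
`α ≤ cos θ < n α`, and `R_θ + R_{-θ} = 2 cos θ • Id` gives (c). -/

open Real

lemma Real.cos_arccos_le {x : ℝ} (hx : -1 ≤ x) : cos (arccos x) ≤ x := by
  rcases le_or_gt x 1 with h1 | h1
  · exact (cos_arccos hx h1).le
  · rw [arccos_of_one_le h1.le, cos_zero]
    exact h1.le

lemma Real.le_cos_arccos {x : ℝ} (hx : x ≤ 1) : x ≤ cos (arccos x) := by
  rcases le_or_gt (-1) x with h1 | h1
  · exact (cos_arccos h1 hx).ge
  · rw [arccos_of_le_neg_one h1.le, cos_pi]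
    exact h1.le

lemma Real.cos_lt_of_arccos_lt {x θ : ℝ} (h : arccos x < θ) (hθ : θ ≤ π) : cos θ < x :=
  calc cos θ < cos (arccos x) := cos_lt_cos_of_nonneg_of_le_pi (arccos_nonneg x) hθ h
    _ ≤ x := cos_arccos_le (arccos_lt_pi.1 (h.trans_le hθ)).le

lemma Real.le_cos_of_le_arccos {x θ : ℝ} (hθ : 0 < θ) (h : θ ≤ arccos x) : x ≤ cos θ :=
  calc x ≤ cos (arccos x) := le_cos_arccos (arccos_pos.1 (hθ.trans_le h)).le
    _ ≤ cos θ := cos_le_cos_of_nonneg_of_le_pi hθ.le (arccos_le_pi x) h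

lemma mul_sq_lt_one_of_lt_one_div_sqrt {a c : ℝ} (ha : 0 < a) (hc : 0 ≤ c) (h : c < 1 / √a) :
    a * c ^ 2 < 1 := by
  rw [lt_div_iff₀ (sqrt_pos.2 ha)] at h
  calc a * c ^ 2 = (c * √a) ^ 2 := by rw [mul_pow, sq_sqrt ha.le, mul_comm]
    _ < 1 := pow_lt_one₀ (by positivity) h two_ne_zero

lemma one_le_mul_sq_of_one_div_sqrt_le {a c : ℝ} (ha : 0 < a) (h : 1 / √a ≤ c) :
    1 ≤ a * c ^ 2 := by
  rw [div_le_iff₀ (sqrt_pos.2 ha)] at h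
  calc 1 ≤ (c * √a) ^ 2 := one_le_pow₀ h
    _ = a * c ^ 2 := by rw [mul_pow, sq_sqrt ha.le, mul_comm]

lemma rot_sub (θ : ℝ) (x y : Fin 2 → ℝ) : Rot θ (x - y) = Rot θ x - Rot θ y := by
  ext i
  fin_cases i <;> simp [Rot] <;> ring

lemma rot_add_rot_neg (θ : ℝ) (x : Fin 2 → ℝ) : Rot θ x + Rot (-θ) x = (2 * cos θ) • x := by
  ext i
  fin_cases i <;> simp [Rot] <;> ring

lemma ns_smul_rot_add_ns_sub (a θ : ℝ) (x : Fin 2 → ℝ) :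
    ns (a • Rot θ x) + ns (x - a • Rot θ x) = ns x - 2 * a * (cos θ - a) * ns x := by
  simp only [ns, Rot, Pi.sub_apply, Pi.smul_apply, smul_eq_mul, Matrix.cons_val_zero,
    Matrix.cons_val_one]
  linear_combination 2 * a ^ 2 * (x 0 ^ 2 + x 1 ^ 2) * sin_sq_add_cos_sq θ

lemma fne_iff_of_map_sub {T : (Fin 2 → ℝ) → Fin 2 → ℝ} (hT : ∀ x y, T (x - y) = T x - T y) :
    FNE T ↔ ∀ x, ns (T x) + ns (x - T x) ≤ ns x := by
  have hT0 : T 0 = 0 := by simpa using hT 0 0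
  refine ⟨fun h x => by simpa [hT0] using h x 0, fun h x y => ?_⟩
  rw [← hT, sub_sub_sub_comm, ← hT]
  exact h (x - y)

lemma fne_smul_rot_iff {a : ℝ} (ha : 0 < a) (θ : ℝ) :
    FNE (fun x => a • Rot θ x) ↔ a ≤ cos θ := by
  rw [fne_iff_of_map_sub fun x y => by rw [rot_sub, smul_sub]]
  simp only [ns_smul_rot_add_ns_sub, sub_le_self_iff]
  refine ⟨fun h => ?_, fun h x => ?_⟩
  · have h10 := h ![1, 0]
    simp only [ns, Matrix.cons_val_zero, Matrix.cons_val_one] at h10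
    nlinarith
  · have : 0 ≤ ns x := by unfold ns; positivity
    have : 0 ≤ cos θ - a := sub_nonneg.2 h
    positivity

theorem scaled_rotations (n : ℕ) (hn : 2 ≤ n) (θ : ℝ)
    (hθ1 : Real.arccos (1 / Real.sqrt 2) < θ)
    (hθ2 : θ ≤ Real.arccos (1 / Real.sqrt (2 * n))) :
    FNE (fun x => (1 / (2 * (n : ℝ) * Real.cos θ)) • Rot θ x) ∧
    FNE (fun x => (1 / (2 * (n : ℝ) * Real.cos θ)) • Rot (-θ) x) ∧
    ¬ FNE (fun x => ((n : ℝ) * (1 / (2 * (n : ℝ) * Real.cos θ))) • Rot θ x) ∧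
    ¬ FNE (fun x => ((n : ℝ) * (1 / (2 * (n : ℝ) * Real.cos θ))) • Rot (-θ) x) ∧
    ∀ x : Fin 2 → ℝ,
      ((n : ℝ) * (1 / (2 * (n : ℝ) * Real.cos θ))) • Rot θ x
        + ((n : ℝ) * (1 / (2 * (n : ℝ) * Real.cos θ))) • Rot (-θ) x = x := by
  have hn0 : (0 : ℝ) < n := Nat.cast_pos.2 (by omega)
  have hθ0 : 0 < θ := (arccos_nonneg _).trans_lt hθ1
  have hc_ge : 1 / √(2 * n) ≤ cos θ := le_cos_of_le_arccos hθ0 hθ2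
  have hc : 0 < cos θ := (by positivity : (0 : ℝ) < 1 / √(2 * n)).trans_le hc_ge
  have h_upper : 2 * cos θ ^ 2 < 1 := mul_sq_lt_one_of_lt_one_div_sqrt two_pos hc.le
    (cos_lt_of_arccos_lt hθ1 (hθ2.trans (arccos_le_pi _)))
  have h_lower : 1 ≤ 2 * n * cos θ ^ 2 := one_le_mul_sq_of_one_div_sqrt_le (by positivity) hc_ge
  have hα_le : 1 / (2 * n * cos θ) ≤ cos θ := by
    rw [div_le_iff₀ (by positivity)]
    linarith
  have hβ_gt : cos θ < 1 / (2 * cos θ) := by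
    rw [lt_div_iff₀ (by positivity)]
    linarith
  have hβ : (n : ℝ) * (1 / (2 * n * cos θ)) = 1 / (2 * cos θ) := by field_simp
  simp only [hβ, fne_smul_rot_iff (by positivity : (0 : ℝ) < 1 / (2 * n * cos θ)),
    fne_smul_rot_iff (by positivity : (0 : ℝ) < 1 / (2 * cos θ)), cos_neg, ← smul_add,
    rot_add_rot_neg, smul_smul, one_div_mul_cancel (by positivity : 2 * cos θ ≠ 0), one_smul,
    implies_true, and_true]
  exact ⟨hα_le, hα_le, hβ_gt.not_ge, hβ_gt.not_ge⟩
end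
end
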